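/- arXiv:2102.10174 — 4 statements merged into one kernel-verified Lean document; each statement's English description precedes it below -/
import Mathlib

section
/- Let G = (V,E) be a finite simple undirected unweighted graph, let s,t ∈ V, and let e ∈ E be an edge such that s and t are connected in G \ {e}. Then there exist a vertex x ∈ V, a shortest s–x path p in G, and a shortest x–t path q in G, such that neither p nor q uses the edge e and the length of p plus the length of q equals dist_{G \ {e}}(s,t); hence the concatenation of p and q is a shortest s–t path in G \ {e}. -/
open SimpleGraph

/-- A *tiebreaking scheme* on `G`: it assigns to each ordered pair `(s, t)` of vertices with
`s` and `t` connected in `G` a single shortest `s`–`t` path in `G`. -/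
structure TieBreaking {V : Type*} (G : SimpleGraph V) where
  path : ∀ s t : V, G.Reachable s t → G.Walk s t
  isPath : ∀ s t h, (path s t h).IsPath
  length_eq : ∀ s t h, (path s t h).length = G.dist s t

/-- A tiebreaking scheme is *symmetric* if `π(s,t)` is the reverse of `π(t,s)`. -/
def TieBreaking.Symm {V : Type*} {G : SimpleGraph V} (π : TieBreaking G) : Prop :=
  ∀ s t (h : G.Reachable s t), π.path t s h.symm = (π.path s t h).reverse

/-- A tiebreaking scheme is *consistent* if whenever `u` precedes `v` on `π(s,t)`,
the path `π(u,v)` is a contiguous subpath of `π(s,t)`. -/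
def TieBreaking.Consistent {V : Type*} {G : SimpleGraph V} (π : TieBreaking G) : Prop :=
  ∀ s t (h : G.Reachable s t) (u v : V) (q : G.Walk s u) (r : G.Walk u v) (r' : G.Walk v t),
    π.path s t h = q.append (r.append r') →
    ∃ (q₂ : G.Walk s u) (r₂ : G.Walk v t),
      π.path s t h = q₂.append ((π.path u v r.reachable).append r₂)

/-- A *replacement path tiebreaking scheme* (RPTS) on `G`: it assigns to each ordered pair
`(s, t)` of vertices and each edge set `F` with `s` and `t` connected in `G \ F` a single
shortest `s`–`t` path in `G \ F`. -/
structure RPTS {V : Type*} (G : SimpleGraph V) where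
  path : ∀ (s t : V) (F : Set (Sym2 V)), (G.deleteEdges F).Reachable s t →
    (G.deleteEdges F).Walk s t
  isPath : ∀ s t F h, (path s t F h).IsPath
  length_eq : ∀ s t F h, (path s t F h).length = (G.deleteEdges F).dist s t

/-- An RPTS is *consistent* if for every `F`, whenever `u` precedes `v` on `π(s,t|F)`,
the path `π(u,v|F)` is a contiguous subpath of `π(s,t|F)`. -/
def RPTS.Consistent {V : Type*} {G : SimpleGraph V} (π : RPTS G) : Prop :=
  ∀ (s t : V) (F : Set (Sym2 V)) (h : (G.deleteEdges F).Reachable s t) (u v : V)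
    (q : (G.deleteEdges F).Walk s u) (r : (G.deleteEdges F).Walk u v)
    (r' : (G.deleteEdges F).Walk v t),
    π.path s t F h = q.append (r.append r') →
    ∃ (q₂ : (G.deleteEdges F).Walk s u) (r₂ : (G.deleteEdges F).Walk v t),
      π.path s t F h = q₂.append ((π.path u v F r.reachable).append r₂)

/-- An RPTS is *stable* if for every edge `e` not lying on `π(s,t|F)` (such that `s,t` are
still connected in `G \ (F ∪ {e})`), we have `π(s,t|F ∪ {e}) = π(s,t|F)`. -/
def RPTS.Stable {V : Type*} {G : SimpleGraph V} (π : RPTS G) : Prop :=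
  ∀ (s t : V) (F : Set (Sym2 V)) (e : Sym2 V)
    (h : (G.deleteEdges F).Reachable s t)
    (h' : (G.deleteEdges (F ∪ {e})).Reachable s t),
    e ∉ (π.path s t F h).edges →
    ∃ hp : ∀ e' ∈ (π.path s t F h).edges, e' ∈ (G.deleteEdges (F ∪ {e})).edgeSet,
      (π.path s t F h).transfer (G.deleteEdges (F ∪ {e})) hp = π.path s t (F ∪ {e}) h'

/-- An RPTS is *symmetric* if `π(s,t|F)` is the reverse of `π(t,s|F)`. -/
def RPTS.Symm {V : Type*} {G : SimpleGraph V} (π : RPTS G) : Prop :=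
  ∀ s t F (h : (G.deleteEdges F).Reachable s t),
    π.path t s F h.symm = (π.path s t F h).reverse

/-- An RPTS is *restorable* if for all `s, t` and nonempty fault sets `F` with `s,t` connected
in `G \ F`, there are a vertex `x` and a proper subset `F' ⊊ F` such that the concatenation of
`π(s,x|F')` with the reverse of `π(t,x|F')` avoids all edges of `F` and has length
`dist_{G \ F}(s,t)`. -/
def RPTS.Restorable {V : Type*} {G : SimpleGraph V} (π : RPTS G) : Prop :=
  ∀ (s t : V) (F : Set (Sym2 V)), F.Nonempty → (G.deleteEdges F).Reachable s t →
    ∃ (x : V) (F' : Set (Sym2 V)) (_ : F' ⊂ F)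
      (h1 : (G.deleteEdges F').Reachable s x)
      (h2 : (G.deleteEdges F').Reachable t x),
      (∀ e ∈ ((π.path s x F' h1).append (π.path t x F' h2).reverse).edges, e ∉ F) ∧
      ((π.path s x F' h1).append (π.path t x F' h2).reverse).length
        = (G.deleteEdges F).dist s t

/-- The edge set of the subgraph of `G` formed by overlaying all `S × V` replacement paths of
the RPTS `π` under at most `f` faults. -/
def overlayEdges {V : Type*} {G : SimpleGraph V} (π : RPTS G) (S : Set V) (f : ℕ) :
    Set (Sym2 V) :=
  {e | ∃ (s : V) (_ : s ∈ S) (v : V) (F : Set (Sym2 V)) (_ : F ⊆ G.edgeSet)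
    (_ : F.ncard ≤ f) (h : (G.deleteEdges F).Reachable s v), e ∈ (π.path s v F h).edges}

/-- `H` is an `f`-FT `S × T` distance preserver of `G`. -/
def IsFTPreserver {V : Type*} (G H : SimpleGraph V) (S T : Set V) (f : ℕ) : Prop :=
  H ≤ G ∧ ∀ F : Set (Sym2 V), F ⊆ G.edgeSet → F.ncard ≤ f → ∀ s ∈ S, ∀ t ∈ T,
    ((H.deleteEdges F).Reachable s t ↔ (G.deleteEdges F).Reachable s t) ∧
    ((G.deleteEdges F).Reachable s t →
      (H.deleteEdges F).dist s t = (G.deleteEdges F).dist s t)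

/-- `H` is an `f`-FT `+k` additive spanner of `G`. -/
def IsFTAddSpanner {V : Type*} (G H : SimpleGraph V) (f k : ℕ) : Prop :=
  H ≤ G ∧ ∀ F : Set (Sym2 V), F ⊆ G.edgeSet → F.ncard ≤ f → ∀ s t : V,
    (G.deleteEdges F).Reachable s t →
    (H.deleteEdges F).Reachable s t ∧
      (H.deleteEdges F).dist s t ≤ (G.deleteEdges F).dist s t + k

section RestorationAux
variable {V : Type*}

lemma rest_split_at_edge {H : SimpleGraph V} (e : Sym2 V) {a b : V} (p : H.Walk a b)
    (hnd : p.edges.Nodup) (he : e ∈ p.edges) :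
    ∃ (u v : V) (p₁ : H.Walk a u) (p₂ : H.Walk v b), e = s(u, v) ∧
      p₁.length + 1 + p₂.length = p.length ∧ e ∉ p₁.edges ∧ e ∉ p₂.edges := by
  induction p with
  | nil => simp at he
  | @cons a c b hadj q ih =>
    rw [Walk.edges_cons, List.nodup_cons] at hnd
    rcases List.mem_cons.mp he with h1 | h2
    · exact ⟨a, c, Walk.nil, q, h1, by simp [Nat.add_comm], by simp, h1 ▸ hnd.1⟩
    · obtain ⟨u, v, p₁, p₂, h3, h4, h5, h6⟩ := ih hnd.2 h2
      refine ⟨u, v, Walk.cons hadj p₁, p₂, h3, ?_, ?_, h6⟩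
      · simp only [Walk.length_cons]; omega
      · simp only [Walk.edges_cons, List.mem_cons, not_or]
        exact ⟨fun hh => hnd.1 (hh ▸ h2), h5⟩

lemma rest_reach_of_le {H G : SimpleGraph V} (hle : H ≤ G) {a b : V}
    (h : H.Reachable a b) : G.Reachable a b := by
  obtain ⟨p⟩ := h
  exact ⟨p.transfer G (fun e' he' => (edgeSet_subset_edgeSet.mpr hle) (p.edges_subset_edgeSet he'))⟩

lemma rest_dist_le_of_le {H G : SimpleGraph V} (hle : H ≤ G) {a b : V}
    (h : H.Reachable a b) : G.dist a b ≤ H.dist a b := by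
  obtain ⟨p, _, hlen⟩ := h.exists_path_of_dist
  have := G.dist_le (p.transfer G (fun e' he' =>
    (edgeSet_subset_edgeSet.mpr hle) (p.edges_subset_edgeSet he')))
  rwa [Walk.length_transfer, hlen] at this

lemma rest_tri {H : SimpleGraph V} {a b c : V} (h1 : H.Reachable a b)
    (h2 : H.Reachable b c) : H.dist a c ≤ H.dist a b + H.dist b c := by
  obtain ⟨p, _, hp⟩ := h1.exists_path_of_dist
  obtain ⟨q, _, hq⟩ := h2.exists_path_of_dist
  have := H.dist_le (p.append q)
  rwa [Walk.length_append, hp, hq] at this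

lemma rest_dist_adj {H : SimpleGraph V} {a b : V} (h : H.Adj a b) : H.dist a b ≤ 1 :=
  H.dist_le h.toWalk

lemma rest_zlemma (G : SimpleGraph V) (s t x z : V) (e : Sym2 V)
    (hsx : (G.deleteEdges {e}).Reachable s x) (hxt : (G.deleteEdges {e}).Reachable x t)
    (hdsx : G.dist s x = (G.deleteEdges {e}).dist s x)
    (hsum : (G.deleteEdges {e}).dist s x + (G.deleteEdges {e}).dist x t
      = (G.deleteEdges {e}).dist s t)
    (hlt : G.dist x t < (G.deleteEdges {e}).dist x t)
    (hadj : (G.deleteEdges {e}).Adj x z) (hzt : (G.deleteEdges {e}).Reachable z t)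
    (hdzt : (G.deleteEdges {e}).dist z t + 1 = (G.deleteEdges {e}).dist x t) :
    G.dist s z = (G.deleteEdges {e}).dist s x + 1 ∧
      (G.deleteEdges {e}).dist s z = (G.deleteEdges {e}).dist s x + 1 := by
  set E := G.deleteEdges {e} with hE
  have hle : E ≤ G := G.deleteEdges_le {e}
  set k := E.dist s x with hk
  set m := E.dist x t with hm
  have hxzE : E.Reachable x z := ⟨hadj.toWalk⟩
  have hsz : E.Reachable s z := hsx.trans hxzE
  have hGsx : G.Reachable s x := rest_reach_of_le hle hsx
  have hGxt : G.Reachable x t := rest_reach_of_le hle hxt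
  have hGxz : G.Reachable x z := ⟨(hle hadj).toWalk⟩
  have d0 : k + 1 ≤ E.dist s z := by
    have := rest_tri hsz hzt
    have h2 := hsum
    omega
  have d1 : G.dist s z ≤ k + 1 := by
    have h1 := rest_tri hGsx hGxz
    have h2 := rest_dist_adj (hle hadj)
    omega
  have dE1 : E.dist s z ≤ k + 1 := by
    have h1 := rest_tri hsx hxzE
    have h2 := rest_dist_adj hadj
    omega
  have dlow : k + 1 ≤ G.dist s z := by
    by_contra hcon
    push_neg at hcon
    have hszk : G.dist s z ≤ k := by omega
    obtain ⟨W, Wp, Wlen⟩ := hGxt.exists_path_of_dist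
    have heW : e ∈ W.edges := by
      by_contra heW
      have hW : E.dist x t ≤ W.length := by
        have := E.dist_le (W.toDeleteEdges {e}
          (fun e' he' h1 => heW (Set.mem_singleton_iff.mp h1 ▸ he')))
        rwa [Walk.length_transfer] at this
      omega
    obtain ⟨u, v, W₁, W₂, heuv, Wsplit, heW₁, heW₂⟩ :=
      rest_split_at_edge e W Wp.isTrail.edges_nodup heW
    set α := W₁.length with hα
    set β := W₂.length with hβ
    have hαβ : α + 1 + β < m := by omega
    let A : E.Walk x u := W₁.toDeleteEdges {e}
      (fun e' he' h1 => heW₁ (Set.mem_singleton_iff.mp h1 ▸ he'))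
    have hAlen : A.length = α := Walk.length_transfer _ _
    let B : E.Walk v t := W₂.toDeleteEdges {e}
      (fun e' he' h1 => heW₂ (Set.mem_singleton_iff.mp h1 ▸ he'))
    have hBlen : B.length = β := Walk.length_transfer _ _
    have dExu : E.dist x u ≤ α := by have := E.dist_le A; omega
    have dEvt : E.dist v t ≤ β := by have := E.dist_le B; omega
    have dGsu : k ≤ G.dist s u + α := by
      have hGxu : G.Reachable x u := ⟨W₁⟩
      have hGsu : G.Reachable s u := hGsx.trans hGxu
      have h1 := rest_tri hGsu hGxu.symm
      have h2 : G.dist u x = G.dist x u := G.dist_comm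
      have h3 : G.dist x u ≤ α := G.dist_le W₁
      omega
    have hvtE : E.Reachable v t := ⟨B⟩
    have hsvE : E.Reachable s v := (hsx.trans hxt).trans hvtE.symm
    have dEsv : k + α + 2 ≤ E.dist s v := by
      have h1 := rest_tri hsvE hvtE
      omega
    have hGsz : G.Reachable s z := hGsx.trans hGxz
    obtain ⟨T, Tp, Tlen⟩ := hGsz.exists_path_of_dist
    have heT : e ∈ T.edges := by
      by_contra heT
      have hT : E.dist s z ≤ T.length := by
        have := E.dist_le (T.toDeleteEdges {e}
          (fun e' he' h1 => heT (Set.mem_singleton_iff.mp h1 ▸ he')))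
        rwa [Walk.length_transfer] at this
      omega
    obtain ⟨a, b, C, D, heab, Tsplit, heC, heD⟩ :=
      rest_split_at_edge e T Tp.isTrail.edges_nodup heT
    rw [heuv, Sym2.eq_iff] at heab
    rcases heab with ⟨h1, h2⟩ | ⟨h1, h2⟩
    · -- u = a, v = b : C : s→u, D : v→z
      subst h1; subst h2
      have dGsuC : G.dist s u ≤ C.length := G.dist_le C
      let D' : E.Walk v z := D.toDeleteEdges {e}
        (fun e' he' h1 => heD (Set.mem_singleton_iff.mp h1 ▸ he'))
      have hD'len : D'.length = D.length := Walk.length_transfer _ _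
      have dEvz : E.dist v z ≤ D.length := by have := E.dist_le D'; omega
      have dEzv : E.dist z v = E.dist v z := E.dist_comm
      have hvz : E.Reachable v z := ⟨D'⟩
      have trit : E.dist z t ≤ E.dist z v + E.dist v t := rest_tri hvz.symm hvtE
      omega
    · -- u = b, v = a : C : s→v avoids e
      subst h1; subst h2
      let C' : E.Walk s v := C.toDeleteEdges {e}
        (fun e' he' h1 => heC (Set.mem_singleton_iff.mp h1 ▸ he'))
      have hC'len : C'.length = C.length := Walk.length_transfer _ _
      have hCk : E.dist s v ≤ C.length := by have := E.dist_le C'; omega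
      omega
  exact ⟨by omega, by omega⟩
lemma rest_descend (G : SimpleGraph V) (s t : V) (e : Sym2 V) :
    ∀ (m : ℕ) (x : V), (G.deleteEdges {e}).Reachable s x →
      (G.deleteEdges {e}).Reachable x t →
      (G.deleteEdges {e}).dist x t ≤ m →
      G.dist s x = (G.deleteEdges {e}).dist s x →
      (G.deleteEdges {e}).dist s x + (G.deleteEdges {e}).dist x t
        = (G.deleteEdges {e}).dist s t →
      ∃ x', (G.deleteEdges {e}).Reachable s x' ∧ (G.deleteEdges {e}).Reachable x' t ∧
        G.dist s x' = (G.deleteEdges {e}).dist s x' ∧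
        G.dist x' t = (G.deleteEdges {e}).dist x' t ∧
        (G.deleteEdges {e}).dist s x' + (G.deleteEdges {e}).dist x' t
          = (G.deleteEdges {e}).dist s t := by
  set E := G.deleteEdges {e} with hE
  have hle : E ≤ G := G.deleteEdges_le {e}
  intro m
  induction m with
  | zero =>
    intro x h1 h2 h3 h4 h5
    have h0 : E.dist x t = 0 := Nat.le_zero.mp h3
    have hxt : x = t := h2.dist_eq_zero_iff.mp h0
    subst hxt
    exact ⟨x, h1, h2, h4, by simp [SimpleGraph.dist_self], h5⟩
  | succ n ih =>
    intro x h1 h2 h3 h4 h5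
    by_cases hc : G.dist x t = E.dist x t
    · exact ⟨x, h1, h2, h4, hc, h5⟩
    · have hlt : G.dist x t < E.dist x t :=
        lt_of_le_of_ne (rest_dist_le_of_le hle h2) hc
      obtain ⟨Q, Qp, Qlen⟩ := h2.exists_path_of_dist
      cases Q with
      | nil =>
        rw [Walk.length_nil] at Qlen
        omega
      | @cons _ z _ hadj Q' =>
        have hzt : E.Reachable z t := ⟨Q'⟩
        have hdzt : E.dist z t + 1 = E.dist x t := by
          rw [Walk.length_cons] at Qlen
          have hd1 := E.dist_le Q'
          have hd2 := rest_tri (⟨hadj.toWalk⟩ : E.Reachable x z) hzt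
          have hd3 := rest_dist_adj hadj
          omega
        obtain ⟨g1, g2⟩ := rest_zlemma G s t x z e h1 h2 h4 h5 hlt hadj hzt hdzt
        rw [← hE] at g1 g2
        exact ih z (h1.trans ⟨hadj.toWalk⟩) hzt (by omega) (by omega) (by omega)

end RestorationAux

/-- Restoration Lemma. In a finite graph `G`, for vertices `s, t` and an
edge `e` of `G` with `s` and `t` connected in `G \ {e}`, there exist a vertex `x`, a shortest
`s`–`x` path `p` in `G` and a shortest `x`–`t` path `q` in `G`, both avoiding `e`, with
`length p + length q = dist_{G \ {e}}(s, t)`. -/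

theorem statement0 {V : Type*} [Fintype V] (G : SimpleGraph V) (s t : V) (e : Sym2 V)
    (he : e ∈ G.edgeSet) (hr : (G.deleteEdges {e}).Reachable s t) :
    ∃ (x : V) (p : G.Walk s x) (q : G.Walk x t),
      p.IsPath ∧ p.length = G.dist s x ∧
      q.IsPath ∧ q.length = G.dist x t ∧
      e ∉ p.edges ∧ e ∉ q.edges ∧
      p.length + q.length = (G.deleteEdges {e}).dist s t := by
  set E := G.deleteEdges {e} with hE
  obtain ⟨x, h1, h2, h3, h4, h5⟩ := rest_descend G s t e (E.dist s t) s
    (Reachable.refl s) hr (le_refl _)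
    (by simp [SimpleGraph.dist_self]) (by simp [SimpleGraph.dist_self])
  obtain ⟨p₀, p₀path, p₀len⟩ := h1.exists_path_of_dist
  obtain ⟨q₀, q₀path, q₀len⟩ := h2.exists_path_of_dist
  have hsub : ∀ {a b : V} (w : E.Walk a b), ∀ e' ∈ w.edges, e' ∈ G.edgeSet := by
    intro a b w e' he'
    have := w.edges_subset_edgeSet he'
    rw [hE, edgeSet_deleteEdges] at this
    exact this.1
  have hnot : ∀ {a b : V} (w : E.Walk a b), e ∉ w.edges := by
    intro a b w hw
    have := w.edges_subset_edgeSet hw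
    rw [hE, edgeSet_deleteEdges] at this
    exact this.2 rfl
  refine ⟨x, p₀.transfer G (hsub p₀), q₀.transfer G (hsub q₀),
    p₀path.transfer _, ?_, q₀path.transfer _, ?_, ?_, ?_, ?_⟩
  · rw [Walk.length_transfer, p₀len, h3]
  · rw [Walk.length_transfer, q₀len, h4]
  · rw [Walk.edges_transfer]; exact hnot p₀
  · rw [Walk.edges_transfer]; exact hnot q₀
  · rw [Walk.length_transfer, Walk.length_transfer, p₀len, q₀len, h5]
end

section
/- There exists a constant C > 0 such that for every finite simple undirected unweighted graph G on n vertices, every vertex subset S ⊆ V, and every consistent and stable RPTS π on G, the subgraph of G formed by overlaying all S×V replacement paths of π under at most 1 fault has at most C · n^{3/2} · |S|^{1/2} edges. -/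
open SimpleGraph

open Walk

namespace S4aux
variable {V : Type*} {G : SimpleGraph V}

lemma loop_eq_nil {s : V} {p : G.Walk s s} (hp : p.IsPath) : p = nil := by
  cases p with
  | nil => rfl
  | cons h q =>
    exfalso
    have hnd := hp.support_nodup
    rw [support_cons] at hnd
    exact (List.nodup_cons.mp hnd).1 q.end_mem_support

lemma edge_decomp {s t : V} {p : G.Walk s t} {e : Sym2 V} (he : e ∈ p.edges) :
    ∃ (a b : V) (hadj : G.Adj a b) (w₁ : G.Walk s a) (w₂ : G.Walk b t),
      p = w₁.append (Walk.cons hadj w₂) ∧ e = s(a, b) := by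
  induction p with
  | nil => simp at he
  | cons h q ih =>
    rw [edges_cons, List.mem_cons] at he
    rcases he with he | he
    · exact ⟨_, _, h, Walk.nil, q, rfl, he⟩
    · obtain ⟨a, b, hadj, w₁, w₂, hw, hee⟩ := ih he
      exact ⟨a, b, hadj, Walk.cons h w₁, w₂, by rw [cons_append, hw], hee⟩

lemma getVert_injOn_aux {s t : V} {p : G.Walk s t} (hp : p.IsPath) :
    ∀ i ≤ p.length, ∀ j ≤ p.length, p.getVert i = p.getVert j → i = j := by
  induction p with
  | nil => intro i hi j hj _; simp only [length_nil, Nat.le_zero] at hi hj; omega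
  | cons h q ih =>
    intro i hi j hj hij
    match i, j with
    | 0, 0 => rfl
    | 0, (j+1) =>
      exfalso
      rw [getVert_zero, getVert_cons_succ] at hij
      have : q.getVert j ∈ q.support :=
        mem_support_iff_exists_getVert.mpr ⟨j, rfl, by simpa [length_cons] using hj⟩
      rw [← hij] at this
      have hnd := hp.support_nodup
      rw [support_cons] at hnd
      exact (List.nodup_cons.mp hnd).1 this
    | (i+1), 0 =>
      exfalso
      rw [getVert_zero, getVert_cons_succ] at hij
      have : q.getVert i ∈ q.support :=
        mem_support_iff_exists_getVert.mpr ⟨i, rfl, by simpa [length_cons] using hi⟩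
      rw [hij] at this
      have hnd := hp.support_nodup
      rw [support_cons] at hnd
      exact (List.nodup_cons.mp hnd).1 this
    | (i+1), (j+1) =>
      rw [getVert_cons_succ, getVert_cons_succ] at hij
      have := ih hp.of_cons i (by simpa [length_cons] using hi) j (by simpa [length_cons] using hj) hij
      omega

end S4aux

namespace S4aux
variable {V : Type*} {G : SimpleGraph V}

lemma path_congr (π : RPTS G) {s t : V} {F₁ F₂ : Set (Sym2 V)} (hF : F₁ = F₂)
    (h₁ : (G.deleteEdges F₁).Reachable s t) (h₂ : (G.deleteEdges F₂).Reachable s t) :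
    (π.path s t F₁ h₁).edges = (π.path s t F₂ h₂).edges := by subst hF; rfl

lemma suffix_eq (π : RPTS G) (hc : π.Consistent) {s v z : V} {F : Set (Sym2 V)}
    (h : (G.deleteEdges F).Reachable s v)
    (hz : z ∈ (π.path s v F h).support) (hzv : (G.deleteEdges F).Reachable z v) :
    ∃ q : (G.deleteEdges F).Walk s z, π.path s v F h = q.append (π.path z v F hzv) := by
  classical
  obtain ⟨q₂, r₂, hq⟩ := hc s v F h z v ((π.path s v F h).takeUntil z hz)
      ((π.path s v F h).dropUntil z hz) Walk.nil
      (by rw [append_nil, take_spec])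
  have hp := π.isPath s v F h
  rw [hq] at hp
  have hr₂ : r₂ = Walk.nil := loop_eq_nil (hp.of_append_right.of_append_right)
  subst hr₂
  rw [append_nil] at hq
  exact ⟨q₂, hq⟩

lemma lastEdge_of_mem_edges (π : RPTS G) (hc : π.Consistent) {s v : V} {F : Set (Sym2 V)}
    (h : (G.deleteEdges F).Reachable s v) {e : Sym2 V}
    (he : e ∈ (π.path s v F h).edges) :
    ∃ (b : V) (hb : (G.deleteEdges F).Reachable s b),
      (π.path s b F hb).edges.getLast? = some e := by
  obtain ⟨a, b, hadj, w₁, w₂, hw, hee⟩ := edge_decomp he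
  have hw' : π.path s v F h = (w₁.append (Walk.cons hadj Walk.nil)).append w₂ := by
    rw [hw, ← append_assoc, cons_append, nil_append]
  obtain ⟨q₂, r₂, hq⟩ := hc s v F h s b Walk.nil (w₁.append (Walk.cons hadj Walk.nil)) w₂
      (by rw [nil_append]; exact hw')
  have hp := π.isPath s v F h
  have hq₂ : q₂ = Walk.nil := loop_eq_nil (by rw [hq] at hp; exact hp.of_append_left)
  subst hq₂
  rw [nil_append] at hq
  refine ⟨b, (w₁.append (Walk.cons hadj Walk.nil)).reachable, ?_⟩
  set P := π.path s b F (w₁.append (Walk.cons hadj Walk.nil)).reachable with hP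
  -- hq : π.path s v F h = P.append r₂
  have hlen : (π.path s v F h).length = P.length + r₂.length := by
    rw [hq, length_append]
  have hlen' : (π.path s v F h).length = (w₁.length + 1) + w₂.length := by
    rw [hw', length_append, length_append, length_cons, length_nil]
  have hb1 : (π.path s v F h).getVert P.length = b := by
    rw [hq, getVert_append]
    simp
  have hb2 : (π.path s v F h).getVert (w₁.length + 1) = b := by
    rw [hw', getVert_append, length_append, length_cons, length_nil]
    simp
  have hPl : P.length = w₁.length + 1 := by
    refine getVert_injOn_aux (π.isPath s v F h) P.length (by omega) (w₁.length + 1) (by omega) ?_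
    rw [hb1, hb2]
  have hqE : (π.path s v F h).edges = P.edges ++ r₂.edges := by rw [hq, edges_append]
  have hwE : (π.path s v F h).edges = w₁.edges ++ (s(a, b) :: w₂.edges) := by
    rw [hw, edges_append, edges_cons]
  have hPe : P.edges.length = w₁.length + 1 := by rw [length_edges, hPl]
  rw [List.getLast?_eq_getElem?, hPe]
  simp only [Nat.add_sub_cancel]
  have h1 : P.edges[w₁.length]? = (π.path s v F h).edges[w₁.length]? := by
    rw [hqE, List.getElem?_append]
    simp [hPe]
  rw [h1, hwE, List.getElem?_append_right (by rw [length_edges]),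
    length_edges]
  simp [hee]

end S4aux

namespace S4aux
variable {V : Type*} {G : SimpleGraph V}

lemma lastEdge_suffix (π : RPTS G) (hc : π.Consistent) {s v z : V} {F : Set (Sym2 V)}
    (h : (G.deleteEdges F).Reachable s v) (hz : z ∈ (π.path s v F h).support) (hne : z ≠ v)
    (hzv : (G.deleteEdges F).Reachable z v) :
    (π.path s v F h).edges.getLast? = (π.path z v F hzv).edges.getLast? := by
  obtain ⟨q, hq⟩ := suffix_eq π hc h hz hzv
  rw [hq, edges_append, List.getLast?_append]
  have hlen : (π.path z v F hzv).edges ≠ [] := by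
    have hle := π.length_eq z v F hzv
    have hd := hzv.pos_dist_of_ne hne
    intro hnil
    rw [← length_edges, hnil] at hle
    simp at hle
    omega
  rw [Option.or_of_isSome (List.getLast?_isSome.mpr hlen)]

lemma dist_le_of_mem_support (π : RPTS G) (hc : π.Consistent) {s v z : V} {F : Set (Sym2 V)}
    (h : (G.deleteEdges F).Reachable s v) (hz : z ∈ (π.path s v F h).support)
    (hzv : (G.deleteEdges F).Reachable z v) :
    (G.deleteEdges F).dist z v ≤ (G.deleteEdges F).dist s v := by
  obtain ⟨q, hq⟩ := suffix_eq π hc h hz hzv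
  have h1 := π.length_eq s v F h
  have h2 := π.length_eq z v F hzv
  rw [hq, length_append, h2] at h1
  omega

lemma getVert_dist (π : RPTS G) (hc : π.Consistent) {s v : V} {F : Set (Sym2 V)}
    (h : (G.deleteEdges F).Reachable s v) {j : ℕ} (hj : j ≤ (π.path s v F h).length) :
    ∃ hzv : (G.deleteEdges F).Reachable ((π.path s v F h).getVert ((π.path s v F h).length - j)) v,
      (G.deleteEdges F).dist ((π.path s v F h).getVert ((π.path s v F h).length - j)) v = j := by
  classical
  set w := π.path s v F h with hwdef
  have hwp : w.IsPath := π.isPath s v F h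
  set z := w.getVert (w.length - j) with hzdef
  have hz : z ∈ w.support := mem_support_iff_exists_getVert.mpr ⟨w.length - j, rfl, by omega⟩
  have hzv : (G.deleteEdges F).Reachable z v := (w.dropUntil z hz).reachable
  obtain ⟨q, hq⟩ := suffix_eq π hc h hz hzv
  rw [← hwdef] at hq
  have h1 : w.length = q.length + (G.deleteEdges F).dist z v := by
    rw [hq, length_append, π.length_eq]
  have hidx : w.getVert q.length = z := by
    rw [hq, getVert_append]
    simp
  have : q.length = w.length - j := by
    refine getVert_injOn_aux hwp q.length (by omega) (w.length - j) (by omega) ?_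
    rw [hidx]
  exact ⟨hzv, by omega⟩

lemma witness_data (π : RPTS G) (hc : π.Consistent) {s v : V} {F : Set (Sym2 V)}
    (h : (G.deleteEdges F).Reachable s v) {f : Sym2 V} (hf : f ∈ (π.path s v F h).edges) :
    ∃ a b : V, f = s(a, b) ∧ (G.deleteEdges F).Reachable b v ∧
      (G.deleteEdges F).dist b v + 1 ≤ (π.path s v F h).length ∧
      a = (π.path s v F h).getVert ((π.path s v F h).length - (G.deleteEdges F).dist b v - 1) ∧
      b = (π.path s v F h).getVert ((π.path s v F h).length - (G.deleteEdges F).dist b v) := by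
  obtain ⟨a, b, hadj, w₁, w₂, hw, hee⟩ := edge_decomp hf
  set w := π.path s v F h with hwdef
  have hwp : w.IsPath := π.isPath s v F h
  set d := (G.deleteEdges F).dist b v with hddef
  have hbv : (G.deleteEdges F).Reachable b v := w₂.reachable
  have hlen : w.length = w₁.length + 1 + w₂.length := by
    rw [hw, length_append, length_cons]; omega
  have hd2 : d ≤ w₂.length := dist_le w₂
  have hb1 : w.getVert (w₁.length + 1) = b := by
    rw [hw, getVert_append]
    simp [Nat.sub_self, getVert_cons_succ]
  have ha1 : w.getVert w₁.length = a := by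
    rw [hw, getVert_append]
    simp
  have hbsup : b ∈ w.support := w.snd_mem_support_of_mem_edges (hee ▸ hf)
  obtain ⟨q, hq⟩ := suffix_eq π hc h hbsup hbv
  rw [← hwdef] at hq
  have h1 : w.length = q.length + d := by
    rw [hq, length_append, π.length_eq]
  have hb2 : w.getVert q.length = b := by
    rw [hq, getVert_append]
    simp
  have hql : q.length = w₁.length + 1 := by
    refine getVert_injOn_aux hwp q.length (by omega) (w₁.length + 1) (by omega) ?_
    rw [hb2, hb1]
  refine ⟨a, b, hee, hbv, by omega, ?_, ?_⟩
  · rw [show w.length - (G.deleteEdges F).dist b v - 1 = w₁.length by omega, ha1]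
  · rw [show w.length - (G.deleteEdges F).dist b v = w₁.length + 1 by omega, hb1]

end S4aux

namespace S4aux
variable {V : Type*} {G : SimpleGraph V}

lemma path_edges_congr_full (π : RPTS G) {s₁ s₂ t : V} {F₁ F₂ : Set (Sym2 V)} (hs : s₁ = s₂)
    (hF : F₁ = F₂) (h₁ : (G.deleteEdges F₁).Reachable s₁ t) (h₂ : (G.deleteEdges F₂).Reachable s₂ t) :
    (π.path s₁ t F₁ h₁).edges = (π.path s₂ t F₂ h₂).edges := by subst hs; subst hF; rfl

/-- the set of "last edges" of replacement paths from sources in `S` to `v`. -/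
def InE (G : SimpleGraph V) (π : RPTS G) (S : Set V) (v : V) : Set (Sym2 V) :=
  {e | ∃ s ∈ S, ∃ F : Set (Sym2 V), F ⊆ G.edgeSet ∧ F.ncard ≤ 1 ∧
    ∃ h : (G.deleteEdges F).Reachable s v, (π.path s v F h).edges.getLast? = some e}

def BaseE (G : SimpleGraph V) (π : RPTS G) (S : Set V) (v : V) : Set (Sym2 V) :=
  {e | ∃ s ∈ S, ∃ h : (G.deleteEdges ∅).Reachable s v, (π.path s v ∅ h).edges.getLast? = some e}

def NewE (G : SimpleGraph V) (π : RPTS G) (S : Set V) (v : V) : Set (Sym2 V) :=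
  {e | ∃ s ∈ S, ∃ f : Sym2 V, ∃ (hf1 : (G.deleteEdges {f}).Reachable s v)
    (h₀ : (G.deleteEdges ∅).Reachable s v),
    f ∈ (π.path s v ∅ h₀).edges ∧ (π.path s v {f} hf1).edges.getLast? = some e}

lemma overlay_subset (π : RPTS G) (hc : π.Consistent) (S : Set V) :
    overlayEdges π S 1 ⊆ ⋃ v : V, InE G π S v := by
  rintro e ⟨s, hs, v, F, hFsub, hF1, h, he⟩
  obtain ⟨b, hb, hlast⟩ := lastEdge_of_mem_edges π hc h he
  exact Set.mem_iUnion.mpr ⟨b, s, hs, F, hFsub, hF1, hb, hlast⟩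

lemma InE_subset [Finite V] (π : RPTS G) (hst : π.Stable) (S : Set V) (v : V) :
    InE G π S v ⊆ BaseE G π S v ∪ NewE G π S v := by
  rintro e ⟨s, hs, F, hFsub, hF1, h, hlast⟩
  rcases (Set.ncard_le_one_iff_eq (Set.toFinite F)).mp hF1 with rfl | ⟨f, rfl⟩
  · exact Or.inl ⟨s, hs, h, hlast⟩
  · have h₀ : (G.deleteEdges ∅).Reachable s v :=
      h.mono (deleteEdges_anti (Set.empty_subset _))
    by_cases hf : f ∈ (π.path s v ∅ h₀).edges
    · exact Or.inr ⟨s, hs, f, h, h₀, hf, hlast⟩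
    · left
      have h' : (G.deleteEdges (∅ ∪ {f})).Reachable s v := by
        rw [Set.empty_union]; exact h
      obtain ⟨hp, htr⟩ := hst s v ∅ f h₀ h' hf
      refine ⟨s, hs, h₀, ?_⟩
      have he1 : (π.path s v ∅ h₀).edges = (π.path s v (∅ ∪ {f}) h').edges := by
        rw [← htr, edges_transfer]
      rw [he1, path_edges_congr_full π rfl (Set.empty_union _) h' h]
      exact hlast

lemma BaseE_ncard_le [Finite V] [Nonempty V] (π : RPTS G) (S : Set V) (v : V) :
    (BaseE G π S v).ncard ≤ S.ncard := by
  classical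
  have H : ∀ e, e ∈ BaseE G π S v → ∃ s : V, s ∈ S ∧ ∃ h : (G.deleteEdges ∅).Reachable s v,
      (π.path s v ∅ h).edges.getLast? = some e := fun e he => by
    obtain ⟨s, hs, h, hl⟩ := he; exact ⟨s, hs, h, hl⟩
  choose! sfun hsS hrest using H
  refine Set.ncard_le_ncard_of_injOn sfun hsS ?_ (Set.toFinite S)
  intro e₁ he₁ e₂ he₂ hss
  obtain ⟨h₁, hl₁⟩ := hrest e₁ he₁
  obtain ⟨h₂, hl₂⟩ := hrest e₂ he₂
  have key : some e₁ = some e₂ := by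
    calc some e₁ = (π.path (sfun e₁) v ∅ h₁).edges.getLast? := hl₁.symm
      _ = (π.path (sfun e₂) v ∅ h₂).edges.getLast? := by
          rw [path_edges_congr_full π hss rfl h₁ h₂]
      _ = some e₂ := hl₂
  exact Option.some_injective _ key

end S4aux

namespace S4aux
variable {V : Type*} {G : SimpleGraph V}

lemma path_getVert_congr (π : RPTS G) {s₁ s₂ t : V} {F₁ F₂ : Set (Sym2 V)} (hs : s₁ = s₂)
    (hF : F₁ = F₂) (h₁ : (G.deleteEdges F₁).Reachable s₁ t)
    (h₂ : (G.deleteEdges F₂).Reachable s₂ t) {i₁ i₂ : ℕ} (hi : i₁ = i₂) :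
    (π.path s₁ t F₁ h₁).getVert i₁ = (π.path s₂ t F₂ h₂).getVert i₂ := by
  subst hs; subst hF; subst hi; rfl

lemma path_length_congr (π : RPTS G) {s₁ s₂ t : V} {F₁ F₂ : Set (Sym2 V)} (hs : s₁ = s₂)
    (hF : F₁ = F₂) (h₁ : (G.deleteEdges F₁).Reachable s₁ t)
    (h₂ : (G.deleteEdges F₂).Reachable s₂ t) :
    (π.path s₁ t F₁ h₁).length = (π.path s₂ t F₂ h₂).length := by
  subst hs; subst hF; rfl

lemma NewE_ncard_le [Fintype V] [Nonempty V] (π : RPTS G) (hc : π.Consistent)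
    (hst : π.Stable) (S : Set V) (v : V) (m : ℕ) (hm : 0 < m) :
    (NewE G π S v).ncard ≤ S.ncard * (m + 1) + Fintype.card V / m := by
  classical
  have H : ∀ e, e ∈ NewE G π S v → ∃ (s : V) (f : Sym2 V) (b : V), s ∈ S ∧
      ∃ (hf1 : (G.deleteEdges {f}).Reachable s v) (h₀ : (G.deleteEdges ∅).Reachable s v),
        f ∈ (π.path s v ∅ h₀).edges ∧
        (π.path s v {f} hf1).edges.getLast? = some e ∧
        (G.deleteEdges ∅).dist b v + 1 ≤ (π.path s v ∅ h₀).length ∧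
        f = s((π.path s v ∅ h₀).getVert
                ((π.path s v ∅ h₀).length - (G.deleteEdges ∅).dist b v - 1),
              (π.path s v ∅ h₀).getVert
                ((π.path s v ∅ h₀).length - (G.deleteEdges ∅).dist b v)) := by
    rintro e ⟨s, hs, f, hf1, h₀, hfe, hl⟩
    obtain ⟨a, b, hfab, hbv, hd1, ha, hb⟩ := witness_data π hc h₀ hfe
    exact ⟨s, f, b, hs, hf1, h₀, hfe, hl, hd1, by rw [hfab, ← ha, ← hb]⟩
  choose! sfun ffun bfun hP using H
  have hinj : Set.InjOn (fun e => (sfun e, (G.deleteEdges ∅).dist (bfun e) v))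
      (NewE G π S v) := by
    intro e₁ he₁ e₂ he₂ hpair
    obtain ⟨hs₁, hf1₁, h₀₁, hfe₁, hl₁, hd1₁, hform₁⟩ := hP e₁ he₁
    obtain ⟨hs₂, hf1₂, h₀₂, hfe₂, hl₂, hd1₂, hform₂⟩ := hP e₂ he₂
    have hss : sfun e₁ = sfun e₂ := congrArg Prod.fst hpair
    have hdd : (G.deleteEdges ∅).dist (bfun e₁) v = (G.deleteEdges ∅).dist (bfun e₂) v :=
      congrArg Prod.snd hpair
    have hlen : (π.path (sfun e₁) v ∅ h₀₁).length = (π.path (sfun e₂) v ∅ h₀₂).length :=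
      path_length_congr π hss rfl h₀₁ h₀₂
    have hff : ffun e₁ = ffun e₂ := by
      rw [hform₁, hform₂,
        path_getVert_congr π hss rfl h₀₁ h₀₂ (by rw [hlen, hdd]),
        path_getVert_congr π hss rfl h₀₁ h₀₂ (by rw [hlen, hdd])]
    have key : some e₁ = some e₂ := by
      calc some e₁ = (π.path (sfun e₁) v {ffun e₁} hf1₁).edges.getLast? := hl₁.symm
        _ = (π.path (sfun e₂) v {ffun e₂} hf1₂).edges.getLast? := by
            rw [path_edges_congr_full π hss (by rw [hff]) hf1₁ hf1₂]
        _ = some e₂ := hl₂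
    exact Option.some_injective _ key
  have hKfin : (NewE G π S v).Finite := Set.toFinite _
  set D : Sym2 V → Finset V := fun e => Finset.univ.filter (fun z =>
    (∃ hzv : (G.deleteEdges {ffun e}).Reachable z v,
      (π.path z v {ffun e} hzv).edges.getLast? = some e) ∧ z ≠ v ∧
      (G.deleteEdges {ffun e}).dist z v < (G.deleteEdges ∅).dist (bfun e) v) with hD
  -- lower bound on |D e|
  have hDcard : ∀ e ∈ NewE G π S v, (G.deleteEdges ∅).dist (bfun e) v - 1 ≤ (D e).card := by
    intro e he
    obtain ⟨hs, hf1, h₀, hfe, hl, hd1, hform⟩ := hP e he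
    have hLlen : (π.path (sfun e) v ∅ h₀).length ≤ (π.path (sfun e) v {ffun e} hf1).length := by
      rw [π.length_eq, π.length_eq]
      exact Reachable.dist_anti (deleteEdges_anti (Set.empty_subset _)) hf1
    have hdP : (G.deleteEdges ∅).dist (bfun e) v + 1 ≤ (π.path (sfun e) v {ffun e} hf1).length :=
      le_trans hd1 hLlen
    have hmaps : ∀ j ∈ Finset.Icc 1 ((G.deleteEdges ∅).dist (bfun e) v - 1),
        (π.path (sfun e) v {ffun e} hf1).getVert
          ((π.path (sfun e) v {ffun e} hf1).length - j) ∈ D e := by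
      intro j hj
      rw [Finset.mem_Icc] at hj
      obtain ⟨hzv, hdist⟩ := getVert_dist π hc hf1
        (show j ≤ (π.path (sfun e) v {ffun e} hf1).length by omega)
      have hzsup : (π.path (sfun e) v {ffun e} hf1).getVert
          ((π.path (sfun e) v {ffun e} hf1).length - j)
          ∈ (π.path (sfun e) v {ffun e} hf1).support :=
        mem_support_iff_exists_getVert.mpr ⟨_, rfl, by omega⟩
      have hne : (π.path (sfun e) v {ffun e} hf1).getVert
          ((π.path (sfun e) v {ffun e} hf1).length - j) ≠ v := by
        intro hzeq
        rw [hzeq, SimpleGraph.dist_self] at hdist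
        omega
      rw [hD, Finset.mem_filter]
      refine ⟨Finset.mem_univ _, ⟨hzv, ?_⟩, hne, by rw [hdist]; omega⟩
      rw [← lastEdge_suffix π hc hf1 hzsup hne hzv]
      exact hl
    have hinjJ : Set.InjOn (fun j => (π.path (sfun e) v {ffun e} hf1).getVert
        ((π.path (sfun e) v {ffun e} hf1).length - j))
        ↑(Finset.Icc 1 ((G.deleteEdges ∅).dist (bfun e) v - 1)) := by
      intro j₁ hj₁ j₂ hj₂ heq
      simp only [Finset.coe_Icc, Set.mem_Icc] at hj₁ hj₂
      have heq' : (π.path (sfun e) v {ffun e} hf1).getVert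
          ((π.path (sfun e) v {ffun e} hf1).length - j₁)
          = (π.path (sfun e) v {ffun e} hf1).getVert
          ((π.path (sfun e) v {ffun e} hf1).length - j₂) := heq
      obtain ⟨_, hda⟩ := getVert_dist π hc hf1
        (show j₁ ≤ (π.path (sfun e) v {ffun e} hf1).length by omega)
      obtain ⟨_, hdb⟩ := getVert_dist π hc hf1
        (show j₂ ≤ (π.path (sfun e) v {ffun e} hf1).length by omega)
      rw [heq'] at hda
      rw [hda] at hdb
      exact hdb
    calc (G.deleteEdges ∅).dist (bfun e) v - 1
        = (Finset.Icc 1 ((G.deleteEdges ∅).dist (bfun e) v - 1)).card := by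
          rw [Nat.card_Icc]; omega
      _ ≤ (D e).card := Finset.card_le_card_of_injOn _ hmaps hinjJ
  -- disjointness of the D e
  have hDdisj : ∀ e₁ ∈ NewE G π S v, ∀ e₂ ∈ NewE G π S v, e₁ ≠ e₂ →
      Disjoint (D e₁) (D e₂) := by
    intro e₁ he₁ e₂ he₂ hne
    rw [Finset.disjoint_left]
    intro z hz₁ hz₂
    rw [hD, Finset.mem_filter] at hz₁ hz₂
    obtain ⟨-, ⟨hzv₁, hl₁⟩, hzne, hlt₁⟩ := hz₁
    obtain ⟨-, ⟨hzv₂, hl₂⟩, -, hlt₂⟩ := hz₂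
    have hz0 : (G.deleteEdges ∅).Reachable z v :=
      hzv₁.mono (deleteEdges_anti (Set.empty_subset _))
    have hQlen : (π.path z v ∅ hz0).length = (G.deleteEdges ∅).dist z v := π.length_eq _ _ _ _
    have hQle₁ : (G.deleteEdges ∅).dist z v ≤ (G.deleteEdges {ffun e₁}).dist z v :=
      Reachable.dist_anti (deleteEdges_anti (Set.empty_subset _)) hzv₁
    have hQle₂ : (G.deleteEdges ∅).dist z v ≤ (G.deleteEdges {ffun e₂}).dist z v :=
      Reachable.dist_anti (deleteEdges_anti (Set.empty_subset _)) hzv₂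
    have hcase : ∀ e, e ∈ NewE G π S v →
        ∀ _hzr : (G.deleteEdges {ffun e}).Reachable z v,
        (G.deleteEdges {ffun e}).dist z v < (G.deleteEdges ∅).dist (bfun e) v →
        ffun e ∉ (π.path z v ∅ hz0).edges := by
      intro e he hzr hlt hmem
      have hQle : (G.deleteEdges ∅).dist z v ≤ (G.deleteEdges {ffun e}).dist z v :=
        Reachable.dist_anti (deleteEdges_anti (Set.empty_subset _)) hzr
      obtain ⟨hs', hf1', h₀', hfe', hl', hd1', hform'⟩ := hP e he
      obtain ⟨hyv, hydist⟩ := getVert_dist π hc h₀'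
        (show (G.deleteEdges ∅).dist (bfun e) v ≤ (π.path (sfun e) v ∅ h₀').length by omega)
      have hy_mem : (π.path (sfun e) v ∅ h₀').getVert
          ((π.path (sfun e) v ∅ h₀').length - (G.deleteEdges ∅).dist (bfun e) v)
          ∈ (π.path z v ∅ hz0).support := by
        apply snd_mem_support_of_mem_edges (π.path z v ∅ hz0)
        rw [← hform']
        exact hmem
      have hled := dist_le_of_mem_support π hc hz0 hy_mem hyv
      rw [hydist] at hled
      omega
    have hnm₁ : ffun e₁ ∉ (π.path z v ∅ hz0).edges := hcase e₁ he₁ hzv₁ hlt₁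
    have hnm₂ : ffun e₂ ∉ (π.path z v ∅ hz0).edges := hcase e₂ he₂ hzv₂ hlt₂
    have hstab : ∀ (f : Sym2 V) (hzf : (G.deleteEdges {f}).Reachable z v),
        f ∉ (π.path z v ∅ hz0).edges →
        (π.path z v ∅ hz0).edges = (π.path z v {f} hzf).edges := by
      intro f hzf hfn
      have h' : (G.deleteEdges (∅ ∪ {f})).Reachable z v := by
        rw [Set.empty_union]; exact hzf
      obtain ⟨hp, htr⟩ := hst z v ∅ f hz0 h' hfn
      have h1 := congrArg Walk.edges htr
      rw [edges_transfer] at h1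
      rw [h1]
      exact path_edges_congr_full π rfl (Set.empty_union _) h' hzf
    apply hne
    have key : some e₁ = some e₂ := by
      calc some e₁ = (π.path z v {ffun e₁} hzv₁).edges.getLast? := hl₁.symm
        _ = (π.path z v ∅ hz0).edges.getLast? := by rw [← hstab _ hzv₁ hnm₁]
        _ = (π.path z v {ffun e₂} hzv₂).edges.getLast? := by rw [hstab _ hzv₂ hnm₂]
        _ = some e₂ := hl₂
    exact Option.some_injective _ key
  -- Finset counting
  set K : Finset (Sym2 V) := hKfin.toFinset with hK
  have hKm : ∀ {e}, e ∈ K ↔ e ∈ NewE G π S v := fun {e} => hKfin.mem_toFinset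
  set K2 : Finset (Sym2 V) :=
    K.filter (fun e => m < (G.deleteEdges ∅).dist (bfun e) v) with hK2
  set K1 : Finset (Sym2 V) :=
    K.filter (fun e => ¬ m < (G.deleteEdges ∅).dist (bfun e) v) with hK1
  have hK2card : K2.card ≤ Fintype.card V / m := by
    rw [Nat.le_div_iff_mul_le hm]
    have hsum : K2.card * m ≤ ∑ e ∈ K2, (D e).card := by
      calc K2.card * m = ∑ _e ∈ K2, m := by rw [Finset.sum_const, smul_eq_mul]
        _ ≤ ∑ e ∈ K2, (D e).card := by
            apply Finset.sum_le_sum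
            intro e he
            rw [hK2, Finset.mem_filter] at he
            have := hDcard e (hKm.mp he.1)
            omega
    have hun : ∑ e ∈ K2, (D e).card = (K2.biUnion D).card := by
      rw [Finset.card_biUnion]
      intro e₁ he₁ e₂ he₂ hne
      rw [Finset.mem_coe, hK2, Finset.mem_filter] at he₁ he₂
      exact hDdisj e₁ (hKm.mp he₁.1) e₂ (hKm.mp he₂.1) hne
    calc K2.card * m ≤ (K2.biUnion D).card := by rw [← hun]; exact hsum
      _ ≤ Fintype.card V := by
          rw [← Finset.card_univ]
          exact Finset.card_le_card (Finset.subset_univ _)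
  have hK1card : K1.card ≤ S.ncard * (m + 1) := by
    have hSfin : S.Finite := Set.toFinite S
    calc K1.card ≤ (hSfin.toFinset ×ˢ Finset.range (m + 1)).card := by
          refine Finset.card_le_card_of_injOn
            (fun e => (sfun e, (G.deleteEdges ∅).dist (bfun e) v)) ?_ ?_
          · intro e he
            rw [Finset.mem_coe, hK1, Finset.mem_filter] at he
            obtain ⟨hs', _⟩ := hP e (hKm.mp he.1)
            rw [Finset.mem_coe, Finset.mem_product, Finset.mem_range]
            have he2 := he.2
            refine ⟨hSfin.mem_toFinset.mpr hs', ?_⟩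
            show (G.deleteEdges ∅).dist (bfun e) v < m + 1
            omega
          · intro e₁ he₁ e₂ he₂ heq
            rw [Finset.mem_coe, hK1, Finset.mem_filter] at he₁ he₂
            exact hinj (hKm.mp he₁.1) (hKm.mp he₂.1) heq
      _ = S.ncard * (m + 1) := by
          rw [Finset.card_product, Finset.card_range, Set.ncard_eq_toFinset_card S hSfin]
  have hsplit : K.card = K2.card + K1.card := by
    rw [hK2, hK1]
    rw [Finset.card_filter_add_card_filter_not]
  have hNK : (NewE G π S v).ncard = K.card := Set.ncard_eq_toFinset_card _ hKfin
  omega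

end S4aux

/-- There is a constant `C > 0` such that for every finite graph `G` on `n`
vertices, every vertex subset `S`, and every consistent stable RPTS `π` on `G`, the subgraph
formed by overlaying all `S × V` replacement paths of `π` under at most one fault has at most
`C · n^{3/2} · |S|^{1/2}` edges. -/
theorem statement4 :
    ∃ C : ℝ, 0 < C ∧
      ∀ (V : Type) [Fintype V], ∀ (G : SimpleGraph V) (S : Set V) (π : RPTS G),
        π.Consistent → π.Stable →
        ((overlayEdges π S 1).ncard : ℝ)
          ≤ C * (Fintype.card V : ℝ) ^ ((3 : ℝ) / 2) * (S.ncard : ℝ) ^ ((1 : ℝ) / 2) := by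
  classical
  refine ⟨64, by norm_num, ?_⟩
  intro V _ G S π hc hst
  by_cases hS : S = ∅
  · subst hS
    have hov : overlayEdges π (∅ : Set V) 1 = ∅ := by
      ext e
      simp only [overlayEdges, Set.mem_setOf_eq, Set.mem_empty_iff_false, iff_false]
      rintro ⟨s, hs, -⟩
      exact hs
    rw [hov, Set.ncard_empty]
    push_cast
    positivity
  · obtain ⟨s₀, hs₀⟩ := Set.nonempty_iff_ne_empty.mpr hS
    have hV : Nonempty V := ⟨s₀⟩
    set n := Fintype.card V with hn
    set σ := S.ncard with hσ
    have hσ1 : 1 ≤ σ := (Set.ncard_pos (Set.toFinite S)).mpr ⟨s₀, hs₀⟩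
    have hσn : σ ≤ n := by
      rw [hσ, hn, ← Nat.card_eq_fintype_card, ← Set.ncard_univ]
      exact Set.ncard_le_ncard (Set.subset_univ S)
    have hn1 : 1 ≤ n := le_trans hσ1 hσn
    set m := Nat.sqrt (n / σ) + 1 with hm
    have hm0 : 0 < m := by omega
    -- per-vertex bound, natural numbers
    have h2 : ∀ v : V, (S4aux.InE G π S v).ncard ≤ σ * (m + 1) + n / m + σ := by
      intro v
      have hb := S4aux.BaseE_ncard_le π S v
      have hnew := S4aux.NewE_ncard_le π hc hst S v m hm0
      rw [← hσ] at hb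
      rw [← hσ, ← hn] at hnew
      have := Set.ncard_le_ncard (S4aux.InE_subset π hst S v)
        (Set.toFinite (S4aux.BaseE G π S v ∪ S4aux.NewE G π S v))
      have hun := Set.ncard_union_le (S4aux.BaseE G π S v) (S4aux.NewE G π S v)
      omega
    -- union bound
    have h1 : (overlayEdges π S 1).ncard ≤ n * (σ * (m + 1) + n / m + σ) := by
      have hsub : overlayEdges π S 1 ⊆ ⋃ v : V, S4aux.InE G π S v :=
        S4aux.overlay_subset π hc S
      have hstep : (overlayEdges π S 1).ncard ≤ (⋃ v : V, S4aux.InE G π S v).ncard :=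
        Set.ncard_le_ncard hsub (Set.toFinite _)
      refine le_trans hstep ?_
      have hfin : ∀ v : V, (S4aux.InE G π S v).Finite := fun v => Set.toFinite _
      have hUfin : (⋃ v : V, S4aux.InE G π S v).Finite := Set.toFinite _
      have hsubF : hUfin.toFinset ⊆ Finset.univ.biUnion (fun v => (hfin v).toFinset) := by
        intro e he
        rw [Set.Finite.mem_toFinset] at he
        obtain ⟨t, ⟨v, rfl⟩, hev⟩ := he
        exact Finset.mem_biUnion.mpr ⟨v, Finset.mem_univ v, (hfin v).mem_toFinset.mpr hev⟩
      calc (⋃ v : V, S4aux.InE G π S v).ncard = hUfin.toFinset.card :=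
            Set.ncard_eq_toFinset_card _ hUfin
        _ ≤ (Finset.univ.biUnion (fun v => (hfin v).toFinset)).card :=
            Finset.card_le_card hsubF
        _ ≤ ∑ v : V, ((hfin v).toFinset).card := Finset.card_biUnion_le
        _ ≤ ∑ _v : V, (σ * (m + 1) + n / m + σ) := by
            apply Finset.sum_le_sum
            intro v _
            rw [← Set.ncard_eq_toFinset_card _ (hfin v)]
            exact h2 v
        _ = n * (σ * (m + 1) + n / m + σ) := by
            rw [Finset.sum_const, Finset.card_univ, smul_eq_mul]
    -- move to the reals
    have hσR : (0:ℝ) < σ := by exact_mod_cast hσ1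
    have hnR : (0:ℝ) < n := by exact_mod_cast hn1
    have hmR : (0:ℝ) < m := by exact_mod_cast hm0
    have hσnR : (σ:ℝ) ≤ n := by exact_mod_cast hσn
    -- √σ·√n facts
    set T : ℝ := Real.sqrt σ * Real.sqrt n with hT
    have hT0 : 0 < T := by positivity
    have hσT : (σ:ℝ) ≤ T := by
      rw [hT]
      calc (σ:ℝ) = Real.sqrt σ * Real.sqrt σ := (Real.mul_self_sqrt (le_of_lt hσR)).symm
        _ ≤ Real.sqrt σ * Real.sqrt n := by
            apply mul_le_mul_of_nonneg_left (Real.sqrt_le_sqrt hσnR) (Real.sqrt_nonneg _)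
    -- n ≤ σ * m², hence n/m ≤ T
    have hnat : n ≤ σ * (m * m) := by
      have h1' := Nat.lt_succ_sqrt (n / σ)
      have h2' := Nat.div_add_mod n σ
      have h3' : n % σ < σ := Nat.mod_lt n (by omega)
      calc n = σ * (n / σ) + n % σ := h2'.symm
        _ ≤ σ * (n / σ) + σ := by omega
        _ = σ * (n / σ + 1) := by ring
        _ ≤ σ * (m * m) := by
            have h1'' : n / σ < ((n / σ).sqrt + 1) * ((n / σ).sqrt + 1) := by
              simpa [Nat.succ_eq_add_one] using Nat.lt_succ_sqrt (n / σ)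
            exact Nat.mul_le_mul_left σ (by rw [hm]; omega)
    have hdivT : ((n / m : ℕ) : ℝ) ≤ T := by
      refine le_trans (Nat.cast_div_le) ?_
      rw [div_le_iff₀ hmR]
      have hsq : Real.sqrt n ≤ Real.sqrt σ * m := by
        rw [show (Real.sqrt σ * m : ℝ) = Real.sqrt (σ * (m*m)) by
          rw [Real.sqrt_mul (le_of_lt hσR), Real.sqrt_mul_self (le_of_lt hmR)]]
        exact Real.sqrt_le_sqrt (by exact_mod_cast hnat)
      calc (n:ℝ) = Real.sqrt n * Real.sqrt n := (Real.mul_self_sqrt (le_of_lt hnR)).symm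
        _ ≤ (Real.sqrt σ * m) * Real.sqrt n := by
            apply mul_le_mul_of_nonneg_right hsq (Real.sqrt_nonneg _)
        _ = T * m := by rw [hT]; ring
    -- σ·m ≤ T + σ
    have hsmT : (σ:ℝ) * m ≤ T + σ := by
      have hs1 : ((Nat.sqrt (n / σ) : ℕ) : ℝ) ≤ Real.sqrt ((n:ℝ) / σ) := by
        rw [show ((n:ℝ)/σ) = ((n:ℝ)/σ) from rfl]
        refine (Real.le_sqrt (by positivity) (by positivity)).mpr ?_
        calc ((Nat.sqrt (n / σ) : ℕ) : ℝ)^2 = ((Nat.sqrt (n/σ) ^ 2 : ℕ) : ℝ) := by push_cast; ring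
          _ ≤ ((n / σ : ℕ) : ℝ) := by exact_mod_cast Nat.sqrt_le' (n / σ)
          _ ≤ (n:ℝ) / σ := Nat.cast_div_le
      have hs2 : (σ:ℝ) * Real.sqrt ((n:ℝ)/σ) = T := by
        rw [Real.sqrt_div (le_of_lt hnR) (σ:ℝ), hT]
        rw [mul_div_assoc' (σ:ℝ) (Real.sqrt n) (Real.sqrt σ), mul_comm (σ:ℝ) (Real.sqrt n),
          mul_div_assoc (Real.sqrt n) (σ:ℝ) (Real.sqrt σ), Real.div_sqrt]
        ring
      calc (σ:ℝ) * m = σ * ((Nat.sqrt (n/σ) : ℕ):ℝ) + σ := by rw [hm]; push_cast; ring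
        _ ≤ σ * Real.sqrt ((n:ℝ)/σ) + σ :=
            by have := mul_le_mul_of_nonneg_left hs1 (le_of_lt hσR); linarith
        _ = T + σ := by rw [hs2]
    -- final chain
    have hcast : ((overlayEdges π S 1).ncard : ℝ) ≤ (n:ℝ) * ((σ * (m+1) + n/m + σ : ℕ) : ℝ) := by
      exact_mod_cast h1
    have hinner : ((σ * (m+1) + n/m + σ : ℕ) : ℝ) ≤ 5 * T := by
      have hmcast : (m:ℝ) = ((Nat.sqrt (n/σ) : ℕ) : ℝ) + 1 := by rw [hm]; push_cast; ring
      have hkey : (σ:ℝ) * (((Nat.sqrt (n/σ) : ℕ):ℝ) + 1 + 1) = (σ:ℝ) * (m:ℝ) + σ := by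
        rw [hmcast]; ring
      push_cast
      linarith [hσT, hdivT, hsmT, hkey]
    have hfinal : ((overlayEdges π S 1).ncard : ℝ) ≤ 5 * ((n:ℝ) * T) := by
      calc ((overlayEdges π S 1).ncard : ℝ) ≤ (n:ℝ) * ((σ * (m+1) + n/m + σ : ℕ) : ℝ) := hcast
        _ ≤ (n:ℝ) * (5 * T) := mul_le_mul_of_nonneg_left hinner hnR.le
        _ = 5 * ((n:ℝ) * T) := by ring
    have hrpow : (n:ℝ) ^ ((3:ℝ)/2) = (n:ℝ) * Real.sqrt n := by
      rw [show (3:ℝ)/2 = 1 + 1/2 by norm_num, Real.rpow_add hnR, Real.rpow_one,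
        ← Real.sqrt_eq_rpow]
    have hrpow2 : ((σ:ℝ)) ^ ((1:ℝ)/2) = Real.sqrt σ := (Real.sqrt_eq_rpow _).symm
    rw [hrpow, hrpow2]
    have hntT : 0 ≤ (n:ℝ) * T := by positivity
    calc ((overlayEdges π S 1).ncard : ℝ) ≤ 5 * ((n:ℝ) * T) := hfinal
      _ ≤ 64 * ((n:ℝ) * T) := by nlinarith [hntT]
      _ = 64 * ((n:ℝ) * Real.sqrt n) * Real.sqrt σ := by rw [hT]; ring
end

section
/- There exists a constant c > 0 such that for every integer σ ≥ 1 there are infinitely many n for which there exist a finite simple undirected unweighted graph G on n vertices and a set S of σ vertices of G such that every 1-FT S×V distance preserver of G has at least c · n^{3/2} · σ^{1/2} edges. -/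
open SimpleGraph

namespace St5

abbrev Vt (σ k m : ℕ) : Type :=
  (Fin σ × (Fin (k + 1) ⊕ (Fin (k - 1) × Fin (2 * k)))) ⊕ Fin m

def vS (σ k m : ℕ) (p : Fin σ) (t : Fin (k + 1)) : Vt σ k m := Sum.inl (p, Sum.inl t)
def vT (σ k m : ℕ) (p : Fin σ) (i : Fin (k - 1)) (j : Fin (2 * k)) : Vt σ k m :=
  Sum.inl (p, Sum.inr (i, j))
def vZ (σ k m : ℕ) (z : Fin m) : Vt σ k m := Sum.inr z

def Rel (σ k m : ℕ) : Vt σ k m → Vt σ k m → Prop := fun x y =>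
  match x, y with
  | .inl (p, .inl t), .inl (q, .inl t') => p = q ∧ (t' : ℕ) = (t : ℕ) + 1
  | .inl (p, .inl t), .inl (q, .inr (i, j)) => p = q ∧ (t : ℕ) = (i : ℕ) + 1 ∧ (j : ℕ) = 0
  | .inl (p, .inr (i, j)), .inl (q, .inr (i', j')) =>
      p = q ∧ i = i' ∧ (j' : ℕ) = (j : ℕ) + 1
  | .inl (_, .inr (i, j)), .inr _ => (j : ℕ) + 2 * (i : ℕ) + 3 = 2 * k
  | _, _ => False

def Gr (σ k m : ℕ) : SimpleGraph (Vt σ k m) := SimpleGraph.fromRel (Rel σ k m)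

/-- The potential function for fault at spine edge `(i+1, i+2)` of copy `p`, target `z = j₀`. -/
def pot (σ k m : ℕ) (p : Fin σ) (i : Fin (k - 1)) (j₀ : Fin m) : Vt σ k m → ℕ := fun x =>
  match x with
  | .inl (q, .inl t) => if q = p ∧ (t : ℕ) ≤ (i : ℕ) + 1 then (t : ℕ) else 2 * k - (i : ℕ)
  | .inl (q, .inr (i', j')) =>
      if q = p ∧ (i' : ℕ) ≤ (i : ℕ) then min ((i' : ℕ) + (j' : ℕ) + 2) (2 * k - (i : ℕ))
      else 2 * k - (i : ℕ)
  | .inr z => if z = j₀ then 2 * k - (i : ℕ) + 1 else 2 * k - (i : ℕ)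

/-- The faulted spine edge. -/
def eF (σ k m : ℕ) (p : Fin σ) (i : Fin (k - 1)) : Sym2 (Vt σ k m) :=
  s(vS σ k m p ⟨(i : ℕ) + 1, by have := i.isLt; omega⟩,
    vS σ k m p ⟨(i : ℕ) + 2, by have := i.isLt; omega⟩)

def aJ (σ k m : ℕ) (i : Fin (k - 1)) : Fin (2 * k) :=
  ⟨2 * k - 2 * (i : ℕ) - 3, by have := i.isLt; omega⟩

/-- The forced edge. -/
def eSt (σ k m : ℕ) (p : Fin σ) (i : Fin (k - 1)) (j₀ : Fin m) : Sym2 (Vt σ k m) :=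
  s(vT σ k m p i (aJ σ k m i), vZ σ k m j₀)

lemma rel_pot_one (σ k m : ℕ) (p : Fin σ) (i : Fin (k - 1)) (j₀ : Fin m) :
    ∀ x y : Vt σ k m, Rel σ k m x y → s(x, y) ≠ eF σ k m p i → s(x, y) ≠ eSt σ k m p i j₀ →
      pot σ k m p i j₀ y ≤ pot σ k m p i j₀ x + 1 ∧
      pot σ k m p i j₀ x ≤ pot σ k m p i j₀ y + 1 := by
  have hik := i.isLt
  rintro (⟨q, t | ⟨i', j'⟩⟩ | z) (⟨q', t' | ⟨i'', j''⟩⟩ | z') hR hne1 hne2 <;>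
    simp only [Rel] at hR
  · -- spine-spine
    obtain ⟨rfl, ht'⟩ := hR
    by_cases hq : q = p
    · subst hq
      have hnum : (t : ℕ) ≠ (i : ℕ) + 1 := by
        intro h
        apply hne1
        have h1 : t = (⟨(i : ℕ) + 1, by omega⟩ : Fin (k + 1)) := Fin.ext h
        have h2 : t' = (⟨(i : ℕ) + 2, by omega⟩ : Fin (k + 1)) :=
          Fin.ext (show (t' : ℕ) = (i : ℕ) + 2 by omega)
        exact congrArg₂ (fun a b => s(Sum.inl (q, Sum.inl a), Sum.inl (q, Sum.inl b))) h1 h2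
      simp only [pot, eq_self_iff_true, true_and]
      split_ifs <;> omega
    · simp only [pot, hq, false_and, if_false]; omega
  · -- spine-tooth
    obtain ⟨rfl, hti, hj0⟩ := hR
    by_cases hq : q = p
    · subst hq
      simp only [pot, eq_self_iff_true, true_and]
      split_ifs <;> omega
    · simp only [pot, hq, false_and, if_false]; omega
  · -- tooth-tooth
    obtain ⟨rfl, rfl, hj⟩ := hR
    by_cases hq : q = p
    · subst hq
      simp only [pot, eq_self_iff_true, true_and]
      split_ifs <;> omega
    · simp only [pot, hq, false_and, if_false]; omega
  · -- tooth - z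
    have hdepth : (j' : ℕ) + 2 * (i' : ℕ) + 3 = 2 * k := hR
    by_cases hq : q = p
    · subst hq
      have hnum : ¬((i' : ℕ) = (i : ℕ) ∧ z' = j₀) := by
        rintro ⟨h1, rfl⟩
        apply hne2
        have hi : i' = i := Fin.ext h1
        subst hi
        have hj : j' = aJ σ k m i' :=
          Fin.ext (show (j' : ℕ) = 2 * k - 2 * (i' : ℕ) - 3 by omega)
        exact congrArg (fun a => s(Sum.inl (q, Sum.inr (i', a)), Sum.inr z')) hj
      have hii' := i'.isLt
      by_cases hz : z' = j₀
      · subst hz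
        simp only [pot, eq_self_iff_true, true_and, if_pos rfl]
        have : (i' : ℕ) ≠ (i : ℕ) := fun h => hnum ⟨h, rfl⟩
        split_ifs <;> omega
      · simp only [pot, eq_self_iff_true, true_and, if_neg hz]
        split_ifs <;> omega
    · simp only [pot, hq, false_and, if_false]
      split_ifs <;> omega

lemma adj_pot (σ k m : ℕ) (p : Fin σ) (i : Fin (k - 1)) (j₀ : Fin m) :
    ∀ x y : Vt σ k m, (Gr σ k m).Adj x y → s(x, y) ≠ eF σ k m p i →
      s(x, y) ≠ eSt σ k m p i j₀ →
      pot σ k m p i j₀ y ≤ pot σ k m p i j₀ x + 1 := by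
  intro x y hadj hne1 hne2
  rw [Gr, SimpleGraph.fromRel_adj] at hadj
  rcases hadj.2 with h | h
  · exact (rel_pot_one σ k m p i j₀ x y h hne1 hne2).1
  · have hs : s(y, x) = s(x, y) := Sym2.eq_swap
    exact (rel_pot_one σ k m p i j₀ y x h (hs ▸ hne1) (hs ▸ hne2)).2


lemma adj_of_rel {σ k m : ℕ} {x y : Vt σ k m} (hne : x ≠ y) (h : Rel σ k m x y) :
    (Gr σ k m).Adj x y := by
  rw [Gr, SimpleGraph.fromRel_adj]; exact ⟨hne, Or.inl h⟩

/-- The replacement route from source `p` to sink `j₀` avoiding the fault. -/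
def route (σ k m : ℕ) (p : Fin σ) (i : Fin (k - 1)) (j₀ : Fin m) (t : ℕ) : Vt σ k m :=
  if h : t ≤ (i : ℕ) + 1 then vS σ k m p ⟨t, by have := i.isLt; omega⟩
  else if h2 : t ≤ 2 * k - (i : ℕ) - 1 then
    vT σ k m p i ⟨t - (i : ℕ) - 2, by have := i.isLt; omega⟩
  else vZ σ k m j₀

lemma route_zero (σ k m : ℕ) (p : Fin σ) (i : Fin (k - 1)) (j₀ : Fin m) :
    route σ k m p i j₀ 0 = vS σ k m p ⟨0, by omega⟩ := by
  rw [route, dif_pos (by omega)]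

lemma route_last (σ k m : ℕ) (p : Fin σ) (i : Fin (k - 1)) (j₀ : Fin m) :
    route σ k m p i j₀ (2 * k - (i : ℕ)) = vZ σ k m j₀ := by
  have := i.isLt
  rw [route, dif_neg (by omega), dif_neg (by omega)]

lemma route_adj (σ k m : ℕ) (p : Fin σ) (i : Fin (k - 1)) (j₀ : Fin m) :
    ∀ t, t < 2 * k - (i : ℕ) →
      ((Gr σ k m).deleteEdges {eF σ k m p i}).Adj
        (route σ k m p i j₀ t) (route σ k m p i j₀ (t + 1)) := by
  have hik := i.isLt
  intro t ht
  rw [SimpleGraph.deleteEdges_adj]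
  rcases Nat.lt_or_ge t ((i : ℕ) + 1) with h1 | h1
  · -- spine step
    rw [route, dif_pos (by omega), route, dif_pos (by omega)]
    refine ⟨adj_of_rel (by simp [vS]) ⟨rfl, rfl⟩, ?_⟩
    intro hmem
    rw [Set.mem_singleton_iff, eF, Sym2.eq_iff] at hmem
    rcases hmem with ⟨ha, hb⟩ | ⟨ha, hb⟩ <;>
      simp only [vS, Sum.inl.injEq, Prod.mk.injEq, Fin.mk.injEq] at ha hb <;> omega
  · rcases Nat.lt_or_ge t (2 * k - (i : ℕ) - 1) with h2 | h2
    · rcases Nat.eq_or_lt_of_le h1 with h3 | h3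
      · -- spine to tooth
        rw [route, dif_pos (by omega), route, dif_neg (by omega), dif_pos (by omega)]
        refine ⟨adj_of_rel (by simp [vS, vT])
          ⟨rfl, show t = (i : ℕ) + 1 by omega, show t + 1 - (i : ℕ) - 2 = 0 by omega⟩, ?_⟩
        intro hmem
        rw [Set.mem_singleton_iff, eF, Sym2.eq_iff] at hmem
        rcases hmem with ⟨ha, hb⟩ | ⟨ha, hb⟩ <;> simp [vS, vT] at hb
      · -- tooth to tooth
        rw [route, dif_neg (by omega), dif_pos (by omega),
          route, dif_neg (by omega), dif_pos (by omega)]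
        refine ⟨adj_of_rel
          (by simp only [vT, ne_eq, Sum.inl.injEq, Prod.mk.injEq, Sum.inr.injEq,
                Fin.mk.injEq]; omega)
          ⟨rfl, rfl, show t + 1 - (i : ℕ) - 2 = (t - (i : ℕ) - 2) + 1 by omega⟩, ?_⟩
        intro hmem
        rw [Set.mem_singleton_iff, eF, Sym2.eq_iff] at hmem
        rcases hmem with ⟨ha, hb⟩ | ⟨ha, hb⟩ <;> simp [vS, vT] at hb
    · -- tooth to z
      rw [route, dif_neg (by omega), dif_pos (by omega), route, dif_neg (by omega),
        dif_neg (by omega)]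
      refine ⟨adj_of_rel (by simp [vT, vZ])
        (show (t - (i : ℕ) - 2) + 2 * (i : ℕ) + 3 = 2 * k by omega), ?_⟩
      intro hmem
      rw [Set.mem_singleton_iff, eF, Sym2.eq_iff] at hmem
      rcases hmem with ⟨ha, hb⟩ | ⟨ha, hb⟩ <;> simp [vS, vZ] at hb


lemma walk_potential {V : Type*} {G : SimpleGraph V} (φ : V → ℕ) :
    ∀ {a b : V} (w : G.Walk a b),
      (∀ x y, G.Adj x y → s(x, y) ∈ w.edges → φ y ≤ φ x + 1) →
      φ b ≤ φ a + w.length := by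
  intro a b w
  induction w with
  | nil => simp
  | @cons u v c h q ih =>
    intro hyp
    have h1 : φ v ≤ φ u + 1 := hyp u v h (by simp)
    have h2 := ih (fun x y hxy hm => hyp x y hxy (by simp [hm]))
    simp only [Walk.length_cons]
    omega

lemma walk_of_chain {V : Type*} {G : SimpleGraph V} (f : ℕ → V) :
    ∀ (L : ℕ), (∀ t, t < L → G.Adj (f t) (f (t + 1))) →
      ∃ w : G.Walk (f 0) (f L), w.length = L := by
  intro L
  induction L with
  | zero => exact fun _ => ⟨Walk.nil, rfl⟩
  | succ L ih =>
    intro h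
    obtain ⟨w, hw⟩ := ih (fun t ht => h t (by omega))
    exact ⟨w.concat (h L (by omega)), by simp [Walk.length_concat, hw]⟩

end St5

open St5

/-- There is a constant `c > 0` such that for every `σ ≥ 1` there are
infinitely many `n` admitting an `n`-vertex graph `G` and a set `S` of `σ` vertices for which
every `1`-FT `S × V` distance preserver of `G` has at least `c · n^{3/2} · σ^{1/2}` edges. -/
theorem statement5 :
    ∃ c : ℝ, 0 < c ∧
      ∀ σ : ℕ, 1 ≤ σ → ∀ N : ℕ, ∃ n : ℕ, N ≤ n ∧
        ∃ (G : SimpleGraph (Fin n)) (S : Set (Fin n)), S.ncard = σ ∧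
          ∀ H : SimpleGraph (Fin n), IsFTPreserver G H S Set.univ 1 →
            c * (n : ℝ) ^ ((3 : ℝ) / 2) * (σ : ℝ) ^ ((1 : ℝ) / 2)
              ≤ (H.edgeSet.ncard : ℝ) := by
  refine ⟨1 / 16, by norm_num, ?_⟩
  intro σ hσ N
  set k := N + 2 with hkdef
  have hk2 : 2 ≤ k := by omega
  set m := 2 * σ * k ^ 2 with hmdef
  set n := Fintype.card (Vt σ k m) with hndef
  have hcard : n = σ * ((k + 1) + (k - 1) * (2 * k)) + m := by
    simp [hndef, Vt, Fintype.card_sum, Fintype.card_prod, Fintype.card_fin, Nat.mul_add]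
  have hkk : k ^ 2 ≤ m := by
    calc k ^ 2 = 1 * k ^ 2 := by ring
    _ ≤ 2 * σ * k ^ 2 := Nat.mul_le_mul_right _ (by omega)
  have hNn : N ≤ n := by
    have h1 : m ≤ n := by omega
    have h2 : k ≤ k ^ 2 := Nat.le_self_pow two_ne_zero k
    omega
  refine ⟨n, hNn, ?_⟩
  set e := Fintype.equivFin (Vt σ k m) with hedef
  set Gn := (Gr σ k m).map e.toEmbedding with hGndef
  set S : Set (Fin n) := Set.range (fun p : Fin σ => e (vS σ k m p ⟨0, by omega⟩)) with hSdef
  have hS : S.ncard = σ := by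
    have hinj : Function.Injective (fun p : Fin σ => e (vS σ k m p ⟨0, by omega⟩)) := by
      intro a b h
      have := e.injective h
      simpa [vS, Prod.ext_iff] using this
    rw [hSdef, ← Set.image_univ, Set.ncard_image_of_injective _ hinj, Set.ncard_univ,
      Nat.card_eq_fintype_card, Fintype.card_fin]
  refine ⟨Gn, S, hS, ?_⟩
  rintro H ⟨hHle, hpres⟩
  -- every special edge is forced into H
  have forced : ∀ (p : Fin σ) (i : Fin (k - 1)) (z : Fin m),
      s(e (vT σ k m p i (aJ σ k m i)), e (vZ σ k m z)) ∈ H.edgeSet := by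
    intro p i z
    have hik := i.isLt
    set F : Set (Sym2 (Fin n)) := {Sym2.map e (eF σ k m p i)} with hF
    have hFsub : F ⊆ Gn.edgeSet := by
      rw [hF, Set.singleton_subset_iff, eF, Sym2.map_pair_eq, SimpleGraph.mem_edgeSet, hGndef]
      exact (SimpleGraph.map_adj _ _ _ _).mpr ⟨vS σ k m p ⟨(i : ℕ) + 1, by omega⟩, vS σ k m p ⟨(i : ℕ) + 2, by omega⟩,
        adj_of_rel (by simp [vS]) ⟨rfl, rfl⟩, rfl, rfl⟩
    have hF1 : F.ncard ≤ 1 := by rw [hF, Set.ncard_singleton]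
    let hom : (Gr σ k m).deleteEdges {eF σ k m p i} →g Gn.deleteEdges F :=
      { toFun := e
        map_rel' := by
          intro a b hab
          rw [SimpleGraph.deleteEdges_adj] at hab ⊢
          refine ⟨(SimpleGraph.map_adj _ _ _ _).mpr ⟨a, b, hab.1, rfl, rfl⟩, ?_⟩
          intro hcon
          rw [hF, Set.mem_singleton_iff, ← Sym2.map_pair_eq] at hcon
          exact hab.2 (Set.mem_singleton_iff.mpr (Sym2.map.injective e.injective hcon)) }
    obtain ⟨w₀, hw₀⟩ :=
      walk_of_chain (route σ k m p i z) (2 * k - (i : ℕ)) (route_adj σ k m p i z)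
    set w₁ := (((w₀.copy (route_zero σ k m p i z) (route_last σ k m p i z)).map hom).copy
      (by exact rfl) (by exact rfl) : (Gn.deleteEdges F).Walk (e (vS σ k m p ⟨0, by omega⟩)) (e (vZ σ k m z)))
      with hw₁def
    have hw₁ : w₁.length = 2 * k - (i : ℕ) := by
      rw [hw₁def, Walk.length_copy, Walk.length_map, Walk.length_copy, hw₀]
    have hreachG : (Gn.deleteEdges F).Reachable
        (e (vS σ k m p ⟨0, by omega⟩)) (e (vZ σ k m z)) := ⟨w₁⟩
    obtain ⟨hiff, hdist⟩ := hpres F hFsub hF1 (e (vS σ k m p ⟨0, by omega⟩)) ⟨p, rfl⟩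
      (e (vZ σ k m z)) (Set.mem_univ _)
    have hreachH := hiff.mpr hreachG
    have hdle : (H.deleteEdges F).dist (e (vS σ k m p ⟨0, by omega⟩)) (e (vZ σ k m z))
        ≤ 2 * k - (i : ℕ) := by
      rw [hdist hreachG]
      exact le_trans (SimpleGraph.dist_le w₁) (le_of_eq hw₁)
    obtain ⟨w, hw⟩ := hreachH.exists_walk_length_eq_dist
    have hkey : s(e (vT σ k m p i (aJ σ k m i)), e (vZ σ k m z)) ∈ w.edges := by
      by_contra hnin
      have hpot := walk_potential (fun x => pot σ k m p i z (e.symm x)) w ?_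
      · simp only [Equiv.symm_apply_apply] at hpot
        have h1 : pot σ k m p i z (vZ σ k m z) = 2 * k - (i : ℕ) + 1 := by simp [pot, vZ]
        have h2 : pot σ k m p i z (vS σ k m p ⟨0, by omega⟩) = 0 := by simp [pot, vS]
        rw [h1, h2, hw] at hpot
        omega
      · intro x y hxy hmemw
        have hxy' := (SimpleGraph.deleteEdges_adj).mp hxy
        have hGn : Gn.Adj x y := hHle hxy'.1
        obtain ⟨a, b, hab, hxa, hyb⟩ := (SimpleGraph.map_adj _ _ _ _).mp hGn
        subst hxa; subst hyb
        simp only [Equiv.coe_toEmbedding, Equiv.symm_apply_apply]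
        refine adj_pot σ k m p i z a b hab ?_ ?_
        · intro hcon
          refine hxy'.2 ?_
          rw [hF, Set.mem_singleton_iff, ← hcon, Sym2.map_pair_eq]
          rfl
        · intro hcon
          apply hnin
          have : s(e.toEmbedding a, e.toEmbedding b)
              = s(e (vT σ k m p i (aJ σ k m i)), e (vZ σ k m z)) := by
            rw [← Sym2.map_pair_eq, hcon, eSt, Sym2.map_pair_eq]
            rfl
          rw [← this]
          exact hmemw
    exact SimpleGraph.edgeSet_mono (SimpleGraph.deleteEdges_le F)
      (w.edges_subset_edgeSet hkey)
  -- counting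
  set Φ : Fin σ × Fin (k - 1) × Fin m → Sym2 (Fin n) :=
    fun q => s(e (vT σ k m q.1 q.2.1 (aJ σ k m q.2.1)), e (vZ σ k m q.2.2)) with hΦdef
  have hΦinj : Function.Injective Φ := by
    rintro ⟨p, i, z⟩ ⟨p', i', z'⟩ h
    simp only [hΦdef, Sym2.eq_iff] at h
    rcases h with ⟨h1, h2⟩ | ⟨h1, h2⟩
    · have h1' := e.injective h1
      have h2' := e.injective h2
      simp only [vT, vZ, Sum.inl.injEq, Sum.inr.injEq, Prod.mk.injEq] at h1' h2'
      exact Prod.ext h1'.1 (Prod.ext h1'.2.1 h2')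
    · have := e.injective h1
      simp [vT, vZ] at this
  have hsub : Set.range Φ ⊆ H.edgeSet := by
    rintro _ ⟨⟨p, i, z⟩, rfl⟩
    exact forced p i z
  have hcount : σ * ((k - 1) * m) ≤ H.edgeSet.ncard := by
    have h1 : (Set.range Φ).ncard = σ * ((k - 1) * m) := by
      rw [← Set.image_univ, Set.ncard_image_of_injective _ hΦinj, Set.ncard_univ,
        Nat.card_eq_fintype_card]
      simp [Fintype.card_prod, Fintype.card_fin]
    exact h1 ▸ Set.ncard_le_ncard hsub (Set.toFinite _)
  -- arithmetic
  have hnle : n ≤ 4 * σ * k ^ 2 := by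
    have hinner : (k + 1) + (k - 1) * (2 * k) ≤ 2 * k ^ 2 := by
      have h1 : k - 1 = N + 1 := by omega
      rw [h1, hkdef]
      nlinarith [sq_nonneg (N : ℤ)]
    calc n = σ * ((k + 1) + (k - 1) * (2 * k)) + m := hcard
    _ ≤ σ * (2 * k ^ 2) + 2 * σ * k ^ 2 := by
        exact Nat.add_le_add (Nat.mul_le_mul_left σ hinner) le_rfl
    _ = 4 * σ * k ^ 2 := by ring
  have hcountR : (↑(σ * ((k - 1) * m)) : ℝ) ≤ (H.edgeSet.ncard : ℝ) := by
    exact_mod_cast hcount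
  have hBval : (↑(σ * ((k - 1) * m)) : ℝ) = (σ : ℝ) * (((N : ℝ) + 1) * (m : ℝ)) := by
    have h1 : k - 1 = N + 1 := by omega
    rw [h1]
    push_cast
    ring
  set X := (n : ℝ) ^ ((3 : ℝ) / 2) * (σ : ℝ) ^ ((1 : ℝ) / 2) with hXdef
  have hn0 : (0 : ℝ) ≤ (n : ℝ) := by positivity
  have hσ0 : (0 : ℝ) ≤ (σ : ℝ) := by positivity
  have hX0 : 0 ≤ X := mul_nonneg (Real.rpow_nonneg hn0 _) (Real.rpow_nonneg hσ0 _)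
  have hX2 : X ^ 2 = (n : ℝ) ^ (3 : ℕ) * (σ : ℝ) := by
    rw [hXdef, mul_pow, ← Real.rpow_natCast ((n : ℝ) ^ ((3 : ℝ) / 2)) 2,
      ← Real.rpow_mul hn0, ← Real.rpow_natCast ((σ : ℝ) ^ ((1 : ℝ) / 2)) 2,
      ← Real.rpow_mul hσ0]
    norm_num
    try exact Or.inl rfl
  have hkey2 : X ≤ 16 * ((σ : ℝ) * (((N : ℝ) + 1) * (m : ℝ))) := by
    have hB0 : (0 : ℝ) ≤ 16 * ((σ : ℝ) * (((N : ℝ) + 1) * (m : ℝ))) := by positivity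
    refine (pow_le_pow_iff_left₀ hX0 hB0 two_ne_zero).mp ?_
    rw [hX2]
    have hnR : (n : ℝ) ≤ 4 * (σ : ℝ) * (k : ℝ) ^ 2 := by exact_mod_cast hnle
    have h3 : (n : ℝ) ^ (3 : ℕ) ≤ (4 * (σ : ℝ) * (k : ℝ) ^ 2) ^ (3 : ℕ) :=
      pow_le_pow_left₀ hn0 hnR 3
    have hmR : (m : ℝ) = 2 * (σ : ℝ) * (k : ℝ) ^ 2 := by
      rw [hmdef]; push_cast; ring
    have hkR : (k : ℝ) = (N : ℝ) + 2 := by rw [hkdef]; push_cast; ring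
    have hσ1 : (1 : ℝ) ≤ (σ : ℝ) := by exact_mod_cast hσ
    have hN0 : (0 : ℝ) ≤ (N : ℝ) := by positivity
    calc (n : ℝ) ^ (3 : ℕ) * (σ : ℝ) ≤ (4 * (σ : ℝ) * (k : ℝ) ^ 2) ^ (3 : ℕ) * (σ : ℝ) :=
          mul_le_mul_of_nonneg_right h3 hσ0
    _ = 64 * (σ : ℝ) ^ 4 * (k : ℝ) ^ 4 * (k : ℝ) ^ 2 := by ring
    _ ≤ 64 * (σ : ℝ) ^ 4 * (k : ℝ) ^ 4 * (16 * ((N : ℝ) + 1) ^ 2) := by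
        refine mul_le_mul_of_nonneg_left ?_ (by positivity)
        rw [hkR]; nlinarith
    _ = (16 * ((σ : ℝ) * (((N : ℝ) + 1) * (2 * (σ : ℝ) * (k : ℝ) ^ 2)))) ^ 2 := by ring
    _ = (16 * ((σ : ℝ) * (((N : ℝ) + 1) * (m : ℝ)))) ^ 2 := by rw [hmR]
  calc (1 : ℝ) / 16 * (n : ℝ) ^ ((3 : ℝ) / 2) * (σ : ℝ) ^ ((1 : ℝ) / 2)
      = 1 / 16 * X := by rw [hXdef]; ring
  _ ≤ 1 / 16 * (16 * ((σ : ℝ) * (((N : ℝ) + 1) * (m : ℝ)))) := by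
      exact mul_le_mul_of_nonneg_left hkey2 (by norm_num)
  _ = (σ : ℝ) * (((N : ℝ) + 1) * (m : ℝ)) := by ring
  _ = (↑(σ * ((k - 1) * m)) : ℝ) := hBval.symm
  _ ≤ (H.edgeSet.ncard : ℝ) := hcountR
end

section
/- There exists a constant c > 0 such that for every integer σ ≥ 1 there are infinitely many n for which there exist a finite simple undirected unweighted graph G on n vertices and a set S of σ vertices of G such that every 2-FT S×V distance preserver of G has at least c · n^{5/3} · σ^{1/3} edges. -/
open SimpleGraph

namespace S7

/-- Vertex type of one source gadget: source, main path, branch spines, tails. -/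
abbrev GV (d : ℕ) :=
  Unit ⊕ Fin d ⊕ (Fin d × Fin (d * d + 2 * (d - 1))) ⊕ (Fin d × Fin d × Fin (2 * (d - 1) + 1))

/-- Full vertex type: `σ` gadgets plus `m` terminals. -/
abbrev V (σ d m : ℕ) := (Fin σ × GV d) ⊕ Fin m

variable {σ d m : ℕ}

def gam (d : ℕ) (i : Fin d) : ℕ := (d - 1 - i.val) * (d + 2)
def tau (d : ℕ) (j : Fin d) : ℕ := 2 * (d - 1 - j.val) + 1

def vsrc (h : Fin σ) : V σ d m := Sum.inl (h, Sum.inl ())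
def vmain (h : Fin σ) (k : Fin d) : V σ d m := Sum.inl (h, Sum.inr (Sum.inl k))
def vspine (h : Fin σ) (k : Fin d) (t : Fin (d * d + 2 * (d - 1))) : V σ d m :=
  Sum.inl (h, Sum.inr (Sum.inr (Sum.inl (k, t))))
def vtail (h : Fin σ) (k j : Fin d) (u : Fin (2 * (d - 1) + 1)) : V σ d m :=
  Sum.inl (h, Sum.inr (Sum.inr (Sum.inr (k, j, u))))
def vterm (z : Fin m) : V σ d m := Sum.inr z

/-- One-directional step relation generating the graph. -/
def Step : V σ d m → V σ d m → Prop := fun x y =>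
  (∃ h k, k.val = 0 ∧ x = vsrc h ∧ y = vmain h k) ∨
  (∃ h k k', k'.val = k.val + 1 ∧ x = vmain h k ∧ y = vmain h k') ∨
  (∃ h k t, t.val = 0 ∧ x = vmain h k ∧ y = vspine h k t) ∨
  (∃ h k t t', t'.val = t.val + 1 ∧ x = vspine h k t ∧ y = vspine h k t') ∨
  (∃ h k j t u, t.val + 1 = gam d k + (j.val + 1) ∧ u.val = 0 ∧
      x = vspine h k t ∧ y = vtail h k j u) ∨
  (∃ h k j u u', u'.val = u.val + 1 ∧ x = vtail h k j u ∧ y = vtail h k j u') ∨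
  (∃ h k j u z, u.val + 1 = tau d j ∧ x = vtail h k j u ∧ y = vterm z)

def Gr (σ d m : ℕ) : SimpleGraph (V σ d m) := SimpleGraph.fromRel Step

/-- The socket of branch `(i,j)` in gadget `h`. -/
def socket (h : Fin σ) (i j : Fin d) : V σ d m :=
  vtail h i j ⟨2 * (d - 1 - j.val), by omega⟩

/-- The two-edge fault set associated to `(h₀, i₀, j₀)`. -/
def Flt (h₀ : Fin σ) (i₀ j₀ : Fin d) : Set (Sym2 (V σ d m)) :=
  {e | ∃ k' : Fin d, k'.val = i₀.val + 1 ∧ e = s(vmain h₀ i₀, vmain h₀ k')} ∪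
  {e | ∃ t t' : Fin (d * d + 2 * (d - 1)), t.val + 1 = gam d i₀ + (j₀.val + 1) ∧
      t'.val = t.val + 1 ∧ e = s(vspine h₀ i₀ t, vspine h₀ i₀ t')}

/-- The target distance value (as an integer). -/
def Dv (d : ℕ) (i₀ j₀ : Fin d) : ℤ :=
  ((d : ℤ) * d + 4 * d + 1) - ((i₀.val + 1) * (d + 1) + (j₀.val + 1))

/-- Potential function: the intended distance from `vsrc h₀` in `Gr \ Flt h₀ i₀ j₀`,
capped at `Dv + 2`. -/
def phi (h₀ : Fin σ) (i₀ j₀ : Fin d) : V σ d m → ℤ := fun x =>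
  match x with
  | Sum.inr _ => Dv d i₀ j₀ + 1
  | Sum.inl (h, Sum.inl _) => if h = h₀ then 0 else Dv d i₀ j₀ + 2
  | Sum.inl (h, Sum.inr (Sum.inl k)) =>
      if h = h₀ ∧ k.val ≤ i₀.val then (k.val + 1 : ℤ) else Dv d i₀ j₀ + 2
  | Sum.inl (h, Sum.inr (Sum.inr (Sum.inl (k, t)))) =>
      if h = h₀ ∧ (k.val < i₀.val ∨ (k = i₀ ∧ t.val + 1 ≤ gam d i₀ + (j₀.val + 1))) then
        min ((k.val + 1 : ℤ) + (t.val + 1)) (Dv d i₀ j₀ + 2) else Dv d i₀ j₀ + 2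
  | Sum.inl (h, Sum.inr (Sum.inr (Sum.inr (k, j, u)))) =>
      if h = h₀ ∧ (k.val < i₀.val ∨ (k = i₀ ∧ j.val ≤ j₀.val)) then
        min ((k.val + 1 : ℤ) + (gam d k : ℤ) + (j.val + 1) + (u.val + 1)) (Dv d i₀ j₀ + 2)
      else Dv d i₀ j₀ + 2

end S7
namespace S7
variable {σ d m : ℕ}

lemma gam_cast (k : Fin d) : (gam d k : ℤ) = ((d : ℤ) - 1 - k.val) * (d + 2) := by
  have h1 : 1 + k.val ≤ d := by have := k.isLt; omega
  rw [gam, Nat.sub_sub, Nat.cast_mul, Nat.cast_sub h1]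
  push_cast; ring

lemma Dv_big (i₀ j₀ : Fin d) : 2 * (d : ℤ) + 1 ≤ Dv d i₀ j₀ := by
  have hi : (i₀.val : ℤ) + 1 ≤ d := by exact_mod_cast i₀.isLt
  have hj : (j₀.val : ℤ) + 1 ≤ d := by exact_mod_cast j₀.isLt
  have h2 : ((i₀.val : ℤ) + 1) * (d + 1) ≤ d * (d + 1) :=
    mul_le_mul_of_nonneg_right hi (by positivity)
  rw [Dv]; push_cast; nlinarith

lemma socket_val (k j : Fin d) (uval : ℕ) (hu : uval + 1 = tau d j) :
    (k.val + 1 : ℤ) + (gam d k : ℤ) + (j.val + 1) + (uval + 1)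
      = ((d : ℤ) * d + 4 * d + 1) - ((k.val + 1) * (d + 1) + (j.val + 1)) := by
  have hj1 : 1 + j.val ≤ d := by have := j.isLt; omega
  have hu' : uval = 2 * (d - (1 + j.val)) := by rw [tau, Nat.sub_sub] at hu; omega
  have : (uval : ℤ) = 2 * ((d : ℤ) - (1 + j.val)) := by
    rw [hu', Nat.cast_mul, Nat.cast_sub hj1]; push_cast; ring
  rw [gam_cast, this]; ring

lemma key_ineq (i₀ j₀ k j : Fin d)
    (h : k.val < i₀.val ∨ (k.val = i₀.val ∧ j.val ≤ j₀.val)) :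
    ((k.val : ℤ) + 1) * (d + 1) + (j.val + 1) ≤ ((i₀.val : ℤ) + 1) * (d + 1) + (j₀.val + 1) := by
  rcases h with h | ⟨h1, h2⟩
  · have h2 : ((k.val : ℤ) + 1) + 1 ≤ (i₀.val : ℤ) + 1 := by
      have : (k.val : ℤ) + 1 ≤ i₀.val := by exact_mod_cast h
      linarith
    have h3 := mul_le_mul_of_nonneg_right h2 (show (0 : ℤ) ≤ d + 1 by positivity)
    have hj : (j.val : ℤ) + 1 ≤ d := by exact_mod_cast j.isLt
    have hj0 : (0 : ℤ) ≤ (j₀.val : ℤ) := by positivity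
    nlinarith
  · have h1' : (k.val : ℤ) = i₀.val := by exact_mod_cast h1
    have h2' : (j.val : ℤ) ≤ j₀.val := by exact_mod_cast h2
    rw [h1']; linarith

lemma key_ineq_strict (i₀ j₀ k j : Fin d)
    (h : k.val < i₀.val ∨ (k.val = i₀.val ∧ j.val ≤ j₀.val))
    (hne : ¬(k.val = i₀.val ∧ j.val = j₀.val)) :
    ((k.val : ℤ) + 1) * (d + 1) + (j.val + 1) + 1
      ≤ ((i₀.val : ℤ) + 1) * (d + 1) + (j₀.val + 1) := by
  rcases h with h | ⟨h1, h2⟩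
  · have h2 : ((k.val : ℤ) + 1) + 1 ≤ (i₀.val : ℤ) + 1 := by
      have : (k.val : ℤ) + 1 ≤ i₀.val := by exact_mod_cast h
      linarith
    have h3 := mul_le_mul_of_nonneg_right h2 (show (0 : ℤ) ≤ d + 1 by positivity)
    have hj : (j.val : ℤ) + 1 ≤ d := by exact_mod_cast j.isLt
    have hj0 : (0 : ℤ) ≤ (j₀.val : ℤ) := by positivity
    nlinarith
  · have h1' : (k.val : ℤ) = i₀.val := by exact_mod_cast h1
    have h2' : (j.val : ℤ) + 1 ≤ j₀.val := by
      have : j.val < j₀.val := by omega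
      exact_mod_cast this
    rw [h1']; linarith

end S7
namespace S7
variable {σ d m : ℕ}

lemma lip_step (h₀ : Fin σ) (i₀ j₀ : Fin d) {x y : V σ d m} (hs : Step x y)
    (hF : s(x, y) ∉ Flt h₀ i₀ j₀) :
    phi h₀ i₀ j₀ y ≤ phi h₀ i₀ j₀ x + 1 ∧ phi h₀ i₀ j₀ x ≤ phi h₀ i₀ j₀ y + 1 := by
  have hB := Dv_big (d := d) i₀ j₀
  rcases hs with ⟨h, k, hk, rfl, rfl⟩ | ⟨h, k, k', hk, rfl, rfl⟩ | ⟨h, k, t, ht, rfl, rfl⟩ |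
    ⟨h, k, t, t', ht, rfl, rfl⟩ | ⟨h, k, j, t, u, ht, hu, rfl, rfl⟩ |
    ⟨h, k, j, u, u', hu, rfl, rfl⟩ | ⟨h, k, j, u, z, hu, rfl, rfl⟩
  · -- src -- main 0
    by_cases hh : h = h₀
    · subst hh
      have hik := i₀.isLt
      simp only [vsrc, vmain, phi, eq_self_iff_true, true_and, if_true, Fin.ext_iff]
      split_ifs <;> omega
    · simp only [vsrc, vmain, phi, hh, false_and, if_false]
      omega
  · -- main k -- main (k+1)
    by_cases hh : h = h₀
    · subst hh
      rcases lt_trichotomy k.val i₀.val with hlt | heq | hgt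
      · simp only [vmain, phi, eq_self_iff_true, true_and]
        split_ifs <;> omega
      · exfalso
        have : k = i₀ := Fin.ext heq
        subst this
        exact hF (Set.mem_union_left _ ⟨k', by omega, rfl⟩)
      · simp only [vmain, phi, eq_self_iff_true, true_and]
        split_ifs <;> omega
    · simp only [vmain, phi, hh, false_and, if_false]
      omega
  · -- main k -- spine k 0
    by_cases hh : h = h₀
    · subst hh
      have hkd := k.isLt
      simp only [vmain, vspine, phi, eq_self_iff_true, true_and, Fin.ext_iff]
      split_ifs <;> omega
    · simp only [vmain, vspine, phi, hh, false_and, if_false]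
      omega
  · -- spine t -- spine (t+1)
    by_cases hh : h = h₀
    · subst hh
      have hkd := k.isLt
      rcases lt_trichotomy (t.val + 1) (gam d i₀ + (j₀.val + 1)) with h1 | h1 | h1
      · simp only [vspine, phi, eq_self_iff_true, true_and, Fin.ext_iff]
        split_ifs <;> omega
      · by_cases hki : k = i₀
        · subst hki
          refine absurd (Set.mem_union_right _ ?_) hF
          exact ⟨t, t', h1, ht, rfl⟩
        · rw [Fin.ext_iff] at hki
          simp only [vspine, phi, eq_self_iff_true, true_and, Fin.ext_iff]
          split_ifs <;> omega
      · simp only [vspine, phi, eq_self_iff_true, true_and, Fin.ext_iff]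
        split_ifs <;> omega
    · simp only [vspine, phi, hh, false_and, if_false]
      omega
  · -- spine (attach point of j) -- tail (k,j) 0
    by_cases hh : h = h₀
    · subst hh
      have hkd := k.isLt
      have hg : k.val = i₀.val → gam d k = gam d i₀ := fun hkk => by rw [gam, gam, hkk]
      simp only [vspine, vtail, phi, eq_self_iff_true, true_and, Fin.ext_iff]
      split_ifs <;> first
        | omega
        | (rename_i hc1 hc2
           rcases hc1 with hc1 | hc1 <;> rcases hc2 with hc2 | hc2 <;>
             first | omega | (have := hg (by omega); omega))
    · simp only [vspine, vtail, phi, hh, false_and, if_false]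
      omega
  · -- tail u -- tail (u+1)
    by_cases hh : h = h₀
    · subst hh
      simp only [vtail, phi, eq_self_iff_true, true_and, Fin.ext_iff]
      split_ifs <;> omega
    · simp only [vtail, phi, hh, false_and, if_false]
      omega
  · -- tail (socket) -- terminal
    by_cases hh : h = h₀
    · subst hh
      have hval := socket_val (d := d) k j u.val hu
      by_cases hc : k.val < i₀.val ∨ (k.val = i₀.val ∧ j.val ≤ j₀.val)
      · have hge := key_ineq i₀ j₀ k j hc
        have hcomb : Dv d i₀ j₀
            ≤ (k.val + 1 : ℤ) + (gam d k : ℤ) + (j.val + 1) + (u.val + 1) := by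
          rw [hval, Dv]; push_cast; linarith
        simp only [vtail, vterm, phi, eq_self_iff_true, true_and, Fin.ext_iff]
        split_ifs <;> omega
      · simp only [vtail, vterm, phi, eq_self_iff_true, true_and, Fin.ext_iff]
        split_ifs <;> omega
    · simp only [vtail, vterm, phi, hh, false_and, if_false]
      omega
  done

end S7
namespace S7
variable {σ d m : ℕ}

/-- Potential for the `e₀`-avoiding lower bound. -/
def psi (h₀ : Fin σ) (i₀ j₀ : Fin d) (z₀ : Fin m) : V σ d m → ℤ := fun x =>
  if x = vterm z₀ then Dv d i₀ j₀ + 2 else phi h₀ i₀ j₀ x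

lemma lip_psi_step (h₀ : Fin σ) (i₀ j₀ : Fin d) (z₀ : Fin m) {x y : V σ d m} (hs : Step x y)
    (hF : s(x, y) ∉ Flt h₀ i₀ j₀) (hne : s(x, y) ≠ s(socket h₀ i₀ j₀, vterm z₀)) :
    psi h₀ i₀ j₀ z₀ y ≤ psi h₀ i₀ j₀ z₀ x + 1 ∧ psi h₀ i₀ j₀ z₀ x ≤ psi h₀ i₀ j₀ z₀ y + 1 := by
  have hB := Dv_big (d := d) i₀ j₀
  have hxt : ∀ x' y' : V σ d m, Step x' y' → x' ≠ vterm z₀ := by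
    rintro x' y' (⟨h, k, hk, rfl, -⟩ | ⟨h, k, k', hk, rfl, -⟩ | ⟨h, k, t, ht, rfl, -⟩ |
      ⟨h, k, t, t', ht, rfl, -⟩ | ⟨h, k, j, t, u, ht, hu, rfl, -⟩ |
      ⟨h, k, j, u, u', hu, rfl, -⟩ | ⟨h, k, j, u, z, hu, rfl, -⟩) <;>
      simp [vsrc, vmain, vspine, vtail, vterm]
  have hx : psi h₀ i₀ j₀ z₀ x = phi h₀ i₀ j₀ x := if_neg (hxt x y hs)
  by_cases hy : y = vterm z₀
  · subst hy
    have hy' : psi h₀ i₀ j₀ z₀ (vterm z₀ : V σ d m) = Dv d i₀ j₀ + 2 := if_pos rfl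
    rw [hx, hy']
    -- x must be a socket
    rcases hs with ⟨h, k, hk, rfl, hyeq⟩ | ⟨h, k, k', hk, rfl, hyeq⟩ | ⟨h, k, t, ht, rfl, hyeq⟩ |
      ⟨h, k, t, t', ht, rfl, hyeq⟩ | ⟨h, k, j, t, u, ht, hu, rfl, hyeq⟩ |
      ⟨h, k, j, u, u', hu, rfl, hyeq⟩ | ⟨h, k, j, u, z, hu, rfl, hyeq⟩
    · exact absurd hyeq.symm (by simp [vmain, vterm])
    · exact absurd hyeq.symm (by simp [vmain, vterm])
    · exact absurd hyeq.symm (by simp [vspine, vterm])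
    · exact absurd hyeq.symm (by simp [vspine, vterm])
    · exact absurd hyeq.symm (by simp [vtail, vterm])
    · exact absurd hyeq.symm (by simp [vtail, vterm])
    -- remaining: tail-terminal case
    have hz : z = z₀ := by
      rw [vterm, vterm] at hyeq
      exact Sum.inr.inj hyeq.symm
    subst hz
    by_cases hh : h = h₀
    · subst hh
      by_cases hc : k.val < i₀.val ∨ (k.val = i₀.val ∧ j.val ≤ j₀.val)
      · by_cases hexact : k.val = i₀.val ∧ j.val = j₀.val
        · exfalso
          apply hne
          have hk' : k = i₀ := Fin.ext hexact.1
          have hj' : j = j₀ := Fin.ext hexact.2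
          subst hk'; subst hj'
          have hu' : u = ⟨2 * (d - 1 - j.val), by omega⟩ := by
            apply Fin.ext
            rw [tau] at hu
            simp only
            omega
          rw [socket, hu']
        · have hge := key_ineq_strict i₀ j₀ k j hc hexact
          have hval := socket_val (d := d) k j u.val hu
          have hcomb : Dv d i₀ j₀ + 1
              ≤ (k.val + 1 : ℤ) + (gam d k : ℤ) + (j.val + 1) + (u.val + 1) := by
            rw [hval, Dv]; push_cast; linarith
          simp only [vtail, phi, eq_self_iff_true, true_and, Fin.ext_iff]
          split_ifs <;> omega
      · simp only [vtail, phi, eq_self_iff_true, true_and, Fin.ext_iff]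
        split_ifs <;> omega
    · simp only [vtail, phi, hh, false_and, if_false]
      omega
  · have hy2 : psi h₀ i₀ j₀ z₀ y = phi h₀ i₀ j₀ y := if_neg hy
    rw [hx, hy2]
    exact lip_step h₀ i₀ j₀ hs hF

lemma lip_adj (h₀ : Fin σ) (i₀ j₀ : Fin d) {x y : V σ d m}
    (ha : ((Gr σ d m).deleteEdges (Flt h₀ i₀ j₀)).Adj x y) :
    phi h₀ i₀ j₀ y ≤ phi h₀ i₀ j₀ x + 1 := by
  rw [SimpleGraph.deleteEdges_adj] at ha
  obtain ⟨hadj, hnF⟩ := ha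
  rw [Gr, SimpleGraph.fromRel_adj] at hadj
  rcases hadj.2 with hs | hs
  · exact (lip_step h₀ i₀ j₀ hs hnF).1
  · rw [Sym2.eq_swap] at hnF
    exact (lip_step h₀ i₀ j₀ hs hnF).2

lemma lip_psi_adj (h₀ : Fin σ) (i₀ j₀ : Fin d) (z₀ : Fin m) {x y : V σ d m}
    (ha : ((Gr σ d m).deleteEdges (Flt h₀ i₀ j₀)).Adj x y)
    (hne : s(x, y) ≠ s(socket h₀ i₀ j₀, vterm z₀)) :
    psi h₀ i₀ j₀ z₀ y ≤ psi h₀ i₀ j₀ z₀ x + 1 := by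
  rw [SimpleGraph.deleteEdges_adj] at ha
  obtain ⟨hadj, hnF⟩ := ha
  rw [Gr, SimpleGraph.fromRel_adj] at hadj
  rcases hadj.2 with hs | hs
  · exact (lip_psi_step h₀ i₀ j₀ z₀ hs hnF hne).1
  · rw [Sym2.eq_swap] at hnF hne
    exact (lip_psi_step h₀ i₀ j₀ z₀ hs hnF hne).2

/-- Walk length lower bound from a `1`-Lipschitz potential. -/
lemma walk_le {W : Type*} {G : SimpleGraph W} (f : W → ℤ)
    (hf : ∀ a b, G.Adj a b → f b ≤ f a + 1) {x y : W} (w : G.Walk x y) :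
    f y - f x ≤ w.length := by
  induction w with
  | nil => simp
  | @cons a b c h p ih =>
    have h1 := hf _ _ h
    rw [SimpleGraph.Walk.length_cons]
    push_cast
    linarith

end S7
namespace S7
variable {σ d m : ℕ}

lemma adj_GF (h₀ : Fin σ) (i₀ j₀ : Fin d) {x y : V σ d m} (hne : x ≠ y) (hs : Step x y)
    (hF : s(x, y) ∉ Flt h₀ i₀ j₀) :
    ((Gr σ d m).deleteEdges (Flt h₀ i₀ j₀)).Adj x y := by
  rw [SimpleGraph.deleteEdges_adj, Gr, SimpleGraph.fromRel_adj]
  exact ⟨⟨hne, Or.inl hs⟩, hF⟩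

lemma attach_lt (i₀ j₀ : Fin d) : gam d i₀ + j₀.val < d * d + 2 * (d - 1) := by
  obtain ⟨e, rfl⟩ : ∃ e, d = e + 1 := ⟨d - 1, by have := i₀.isLt; omega⟩
  have h1 : gam (e + 1) i₀ ≤ e * (e + 3) := by
    rw [gam]
    have h2 : e + 1 - 1 - i₀.val ≤ e := by omega
    calc (e + 1 - 1 - i₀.val) * (e + 1 + 2) ≤ e * (e + 1 + 2) :=
          Nat.mul_le_mul_right _ h2
      _ = e * (e + 3) := by ring
  have h3 : j₀.val < e + 1 := j₀.isLt
  have h4 : e + 1 - 1 = e := rfl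
  rw [h4]
  nlinarith

lemma walk_to_main (h₀ : Fin σ) (i₀ j₀ : Fin d) :
    ∀ kk : ℕ, ∀ hkk : kk < d, kk ≤ i₀.val →
      ∃ w : ((Gr σ d m).deleteEdges (Flt h₀ i₀ j₀)).Walk (vsrc h₀) (vmain h₀ ⟨kk, hkk⟩),
        w.length = kk + 1 := by
  intro kk
  induction kk with
  | zero =>
    intro hkk _
    refine ⟨SimpleGraph.Walk.cons (adj_GF h₀ i₀ j₀ ?_ ?_ ?_) SimpleGraph.Walk.nil, by simp⟩
    · simp [vsrc, vmain]
    · exact Or.inl ⟨h₀, ⟨0, hkk⟩, rfl, rfl, rfl⟩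
    · rintro (⟨k', hk', he⟩ | ⟨t, t', ht, ht', he⟩) <;>
        simp [vsrc, vmain, vspine, Sym2.eq_iff] at he
  | succ kk ih =>
    intro hkk hle
    obtain ⟨w, hw⟩ := ih (by omega) (by omega)
    refine ⟨w.concat (adj_GF h₀ i₀ j₀ ?_ ?_ ?_), by
      rw [SimpleGraph.Walk.length_concat, hw]⟩
    · simp [vmain, Fin.ext_iff]
    · exact Or.inr (Or.inl ⟨h₀, ⟨kk, by omega⟩, ⟨kk + 1, hkk⟩, rfl, rfl, rfl⟩)
    · rintro (⟨k', hk', he⟩ | ⟨t, t', ht, ht', he⟩) <;>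
        simp [vmain, vspine, Sym2.eq_iff, Fin.ext_iff] at he <;> omega

lemma walk_to_spine (h₀ : Fin σ) (i₀ j₀ : Fin d) :
    ∀ tt : ℕ, ∀ htt : tt < d * d + 2 * (d - 1), tt ≤ gam d i₀ + j₀.val →
      ∃ w : ((Gr σ d m).deleteEdges (Flt h₀ i₀ j₀)).Walk (vmain h₀ i₀)
          (vspine h₀ i₀ ⟨tt, htt⟩),
        w.length = tt + 1 := by
  intro tt
  induction tt with
  | zero =>
    intro htt _
    refine ⟨SimpleGraph.Walk.cons (adj_GF h₀ i₀ j₀ ?_ ?_ ?_) SimpleGraph.Walk.nil, by simp⟩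
    · simp [vmain, vspine]
    · exact Or.inr (Or.inr (Or.inl ⟨h₀, i₀, ⟨0, htt⟩, rfl, rfl, rfl⟩))
    · rintro (⟨k', hk', he⟩ | ⟨t, t', ht, ht', he⟩) <;>
        simp [vmain, vspine, Sym2.eq_iff] at he
  | succ tt ih =>
    intro htt hle
    obtain ⟨w, hw⟩ := ih (by omega) (by omega)
    refine ⟨w.concat (adj_GF h₀ i₀ j₀ ?_ ?_ ?_), by
      rw [SimpleGraph.Walk.length_concat, hw]⟩
    · simp [vspine, Fin.ext_iff]
    · exact Or.inr (Or.inr (Or.inr (Or.inl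
        ⟨h₀, i₀, ⟨tt, by omega⟩, ⟨tt + 1, htt⟩, rfl, rfl, rfl⟩)))
    · rintro (⟨k', hk', he⟩ | ⟨t, t', ht, ht', he⟩) <;>
        simp [vmain, vspine, Sym2.eq_iff, Fin.ext_iff] at he <;> omega

lemma walk_to_sock (h₀ : Fin σ) (i₀ j₀ : Fin d) :
    ∀ uu : ℕ, ∀ huu : uu < 2 * (d - 1) + 1, uu ≤ 2 * (d - 1 - j₀.val) →
      ∃ w : ((Gr σ d m).deleteEdges (Flt h₀ i₀ j₀)).Walk
          (vspine h₀ i₀ ⟨gam d i₀ + j₀.val, attach_lt i₀ j₀⟩)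
          (vtail h₀ i₀ j₀ ⟨uu, huu⟩),
        w.length = uu + 1 := by
  intro uu
  induction uu with
  | zero =>
    intro huu _
    refine ⟨SimpleGraph.Walk.cons (adj_GF h₀ i₀ j₀ ?_ ?_ ?_) SimpleGraph.Walk.nil, by
      rw [SimpleGraph.Walk.length_cons, SimpleGraph.Walk.length_nil]⟩
    · simp [vspine, vtail]
    · exact Or.inr (Or.inr (Or.inr (Or.inr (Or.inl
        ⟨h₀, i₀, j₀, ⟨gam d i₀ + j₀.val, attach_lt i₀ j₀⟩, ⟨0, huu⟩,
          by show gam d i₀ + j₀.val + 1 = gam d i₀ + (j₀.val + 1); omega, rfl, rfl,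
          rfl⟩))))
    · rintro (⟨k', hk', he⟩ | ⟨t, t', ht, ht', he⟩) <;>
        simp [vmain, vspine, vtail, Sym2.eq_iff] at he
  | succ uu ih =>
    intro huu hle
    obtain ⟨w, hw⟩ := ih (by omega) (by omega)
    refine ⟨w.concat (adj_GF h₀ i₀ j₀ ?_ ?_ ?_), by
      rw [SimpleGraph.Walk.length_concat, hw]⟩
    · simp [vtail, Fin.ext_iff]
    · exact Or.inr (Or.inr (Or.inr (Or.inr (Or.inr (Or.inl
        ⟨h₀, i₀, j₀, ⟨uu, by omega⟩, ⟨uu + 1, huu⟩, rfl, rfl, rfl⟩)))))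
    · rintro (⟨k', hk', he⟩ | ⟨t, t', ht, ht', he⟩) <;>
        simp [vmain, vspine, vtail, Sym2.eq_iff] at he

/-- The natural-number distance value. -/
def Dn (d : ℕ) (i₀ j₀ : Fin d) : ℕ :=
  (i₀.val + 1) + (gam d i₀ + j₀.val + 1) + (2 * (d - 1 - j₀.val) + 1)

lemma Dn_cast (i₀ j₀ : Fin d) : (Dn d i₀ j₀ : ℤ) = Dv d i₀ j₀ := by
  have h := socket_val (d := d) i₀ j₀ (2 * (d - 1 - j₀.val)) (by rw [tau])
  rw [Dn, Dv]
  push_cast at h ⊢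
  linarith

lemma witness (h₀ : Fin σ) (i₀ j₀ : Fin d) (z : Fin m) :
    ∃ w : ((Gr σ d m).deleteEdges (Flt h₀ i₀ j₀)).Walk (vsrc h₀) (vterm z),
      w.length = Dn d i₀ j₀ + 1 := by
  obtain ⟨w1, hw1⟩ := walk_to_main (m := m) h₀ i₀ j₀ i₀.val i₀.isLt le_rfl
  obtain ⟨w2, hw2⟩ := walk_to_spine (m := m) h₀ i₀ j₀ (gam d i₀ + j₀.val)
    (attach_lt i₀ j₀) le_rfl
  obtain ⟨w3, hw3⟩ := walk_to_sock (m := m) h₀ i₀ j₀ (2 * (d - 1 - j₀.val))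
    (by omega) le_rfl
  let w1' := w1.copy rfl (by rw [Fin.eta])
  have hw1' : w1'.length = i₀.val + 1 := by
    rw [SimpleGraph.Walk.length_copy, hw1]
  have hadj : ((Gr σ d m).deleteEdges (Flt h₀ i₀ j₀)).Adj
      (vtail h₀ i₀ j₀ ⟨2 * (d - 1 - j₀.val), by omega⟩) (vterm z) := by
    refine adj_GF h₀ i₀ j₀ ?_ ?_ ?_
    · simp [vtail, vterm]
    · exact Or.inr (Or.inr (Or.inr (Or.inr (Or.inr (Or.inr
        ⟨h₀, i₀, j₀, ⟨2 * (d - 1 - j₀.val), by omega⟩, z, by rw [tau], rfl, rfl⟩)))))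
    · rintro (⟨k', hk', he⟩ | ⟨t, t', ht, ht', he⟩) <;>
        simp [vmain, vspine, vtail, vterm, Sym2.eq_iff] at he
  refine ⟨((w1'.append w2).append w3).concat hadj, ?_⟩
  rw [SimpleGraph.Walk.length_concat, SimpleGraph.Walk.length_append,
    SimpleGraph.Walk.length_append, hw1', hw2, hw3, Dn]

lemma Flt_subset (h₀ : Fin σ) (i₀ j₀ : Fin d) :
    Flt (m := m) h₀ i₀ j₀ ⊆ (Gr σ d m).edgeSet := by
  rintro e (⟨k', hk', rfl⟩ | ⟨t, t', ht, ht', rfl⟩)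
  · rw [SimpleGraph.mem_edgeSet, Gr, SimpleGraph.fromRel_adj]
    exact ⟨by simp [vmain, Fin.ext_iff]; omega,
      Or.inl (Or.inr (Or.inl ⟨h₀, i₀, k', hk', rfl, rfl⟩))⟩
  · rw [SimpleGraph.mem_edgeSet, Gr, SimpleGraph.fromRel_adj]
    exact ⟨by simp [vspine, Fin.ext_iff]; omega,
      Or.inl (Or.inr (Or.inr (Or.inr (Or.inl ⟨h₀, i₀, t, t', ht', rfl, rfl⟩))))⟩

lemma Flt_ncard (h₀ : Fin σ) (i₀ j₀ : Fin d) : (Flt (m := m) h₀ i₀ j₀).ncard ≤ 2 := by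
  have h1 : ({e | ∃ k' : Fin d, k'.val = i₀.val + 1 ∧
      e = s(vmain (m := m) h₀ i₀, vmain h₀ k')} : Set (Sym2 (V σ d m))).ncard ≤ 1 := by
    rw [Set.ncard_le_one (Set.toFinite _)]
    rintro a ⟨k1, hk1, rfl⟩ b ⟨k2, hk2, rfl⟩
    rw [show k1 = k2 from Fin.ext (by omega)]
  have h2 : ({e | ∃ t t' : Fin (d * d + 2 * (d - 1)),
      t.val + 1 = gam d i₀ + (j₀.val + 1) ∧ t'.val = t.val + 1 ∧
      e = s(vspine (m := m) h₀ i₀ t, vspine h₀ i₀ t')} : Set (Sym2 (V σ d m))).ncard ≤ 1 := by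
    rw [Set.ncard_le_one (Set.toFinite _)]
    rintro a ⟨t1, t1', ht1, ht1', rfl⟩ b ⟨t2, t2', ht2, ht2', rfl⟩
    rw [show t1 = t2 from Fin.ext (by omega), show t1' = t2' from Fin.ext (by omega)]
  calc (Flt (m := m) h₀ i₀ j₀).ncard ≤ _ + _ := Set.ncard_union_le _ _
    _ ≤ 2 := by omega

end S7
namespace S7
variable {σ d m : ℕ}

lemma forced (h₀ : Fin σ) (i₀ j₀ : Fin d) (z : Fin m) (H : SimpleGraph (V σ d m))
    (hH : IsFTPreserver (Gr σ d m) H (Set.range (vsrc : Fin σ → V σ d m)) Set.univ 2) :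
    s(socket h₀ i₀ j₀, vterm z) ∈ H.edgeSet := by
  by_contra he
  obtain ⟨w, hw⟩ := witness (σ := σ) (m := m) h₀ i₀ j₀ z
  have hreachG : ((Gr σ d m).deleteEdges (Flt h₀ i₀ j₀)).Reachable (vsrc h₀) (vterm z) :=
    w.reachable
  obtain ⟨hiff, hdist⟩ := hH.2 (Flt h₀ i₀ j₀) (Flt_subset h₀ i₀ j₀) (Flt_ncard h₀ i₀ j₀)
    (vsrc h₀) ⟨h₀, rfl⟩ (vterm z) (Set.mem_univ _)
  have hphisrc : phi (m := m) h₀ i₀ j₀ (vsrc h₀) = 0 := by simp [vsrc, phi]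
  have hphiterm : phi (m := m) h₀ i₀ j₀ (vterm z) = Dv d i₀ j₀ + 1 := rfl
  have hcast := Dn_cast i₀ j₀
  have hlbG : (Dn d i₀ j₀ : ℤ) + 1
      ≤ (((Gr σ d m).deleteEdges (Flt h₀ i₀ j₀)).dist (vsrc h₀) (vterm z) : ℤ) := by
    obtain ⟨w', hw'⟩ := hreachG.exists_walk_length_eq_dist
    have hb := walk_le (phi h₀ i₀ j₀) (fun a b hab => lip_adj h₀ i₀ j₀ hab) w'
    rw [hw', hphiterm, hphisrc] at hb
    linarith
  have hubG : ((Gr σ d m).deleteEdges (Flt h₀ i₀ j₀)).dist (vsrc h₀) (vterm z)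
      ≤ Dn d i₀ j₀ + 1 := hw ▸ SimpleGraph.dist_le w
  have hdG : ((Gr σ d m).deleteEdges (Flt h₀ i₀ j₀)).dist (vsrc h₀) (vterm z)
      = Dn d i₀ j₀ + 1 := by omega
  have hreachH := hiff.mpr hreachG
  have hdH : (H.deleteEdges (Flt h₀ i₀ j₀)).dist (vsrc h₀) (vterm z) = Dn d i₀ j₀ + 1 := by
    rw [hdist hreachG, hdG]
  obtain ⟨wH, hwH⟩ := hreachH.exists_walk_length_eq_dist
  have hlip : ∀ a b : V σ d m, (H.deleteEdges (Flt h₀ i₀ j₀)).Adj a b →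
      psi h₀ i₀ j₀ z b ≤ psi h₀ i₀ j₀ z a + 1 := by
    intro a b hab
    rw [SimpleGraph.deleteEdges_adj] at hab
    have hG : ((Gr σ d m).deleteEdges (Flt h₀ i₀ j₀)).Adj a b := by
      rw [SimpleGraph.deleteEdges_adj]
      exact ⟨hH.1 hab.1, hab.2⟩
    have hne : s(a, b) ≠ s(socket h₀ i₀ j₀, vterm z) := by
      intro hEq
      exact he (hEq ▸ (SimpleGraph.mem_edgeSet H).mpr hab.1)
    exact lip_psi_adj h₀ i₀ j₀ z hG hne
  have hb2 := walk_le (psi h₀ i₀ j₀ z) hlip wH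
  have hps : psi (m := m) h₀ i₀ j₀ z (vsrc h₀) = 0 := by
    rw [psi]
    simp only [if_neg (show (vsrc h₀ : V σ d m) ≠ vterm z by simp [vsrc, vterm])]
    exact hphisrc
  have hpt : psi (m := m) h₀ i₀ j₀ z (vterm z) = Dv d i₀ j₀ + 2 := if_pos rfl
  rw [hwH, hdH, hps, hpt] at hb2
  push_cast at hb2
  omega

end S7
namespace S7

lemma iso_dist {α β : Type*} {A : SimpleGraph α} {B : SimpleGraph β} (f : A ≃g B) (u v : α) :
    B.dist (f u) (f v) = A.dist u v := by
  by_cases hr : A.Reachable u v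
  · apply le_antisymm
    · obtain ⟨w, hw⟩ := hr.exists_walk_length_eq_dist
      calc B.dist (f u) (f v) ≤ (w.map f.toHom).length := SimpleGraph.dist_le _
        _ = A.dist u v := by rw [SimpleGraph.Walk.length_map, hw]
    · have hr' : B.Reachable (f u) (f v) := Iso.reachable_iff.mpr hr
      obtain ⟨w, hw⟩ := hr'.exists_walk_length_eq_dist
      calc A.dist u v = A.dist (f.symm (f u)) (f.symm (f v)) := by simp
        _ ≤ (w.map f.symm.toHom).length := SimpleGraph.dist_le _
        _ = B.dist (f u) (f v) := by rw [SimpleGraph.Walk.length_map, hw]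
  · have hr' : ¬B.Reachable (f u) (f v) := fun h => hr (Iso.reachable_iff.mp h)
    rw [SimpleGraph.dist_eq_zero_of_not_reachable hr,
      SimpleGraph.dist_eq_zero_of_not_reachable hr']

lemma transport {α β : Type*} [Finite β] (e : α ≃ β) (G₀ : SimpleGraph α) (S : Set α) (k : ℕ)
    (hcore : ∀ H, IsFTPreserver G₀ H S Set.univ 2 → k ≤ H.edgeSet.ncard) :
    ∀ H' : SimpleGraph β, IsFTPreserver (G₀.comap ⇑e.symm) H' (⇑e '' S) Set.univ 2 →
      k ≤ H'.edgeSet.ncard := by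
  intro H' hH'
  have hinj2 : Function.Injective (Sym2.map ⇑e) := Sym2.map.injective e.injective
  set H : SimpleGraph α := H'.comap ⇑e with hHdef
  have hG'adj : ∀ a b : α, (G₀.comap ⇑e.symm).Adj (e a) (e b) ↔ G₀.Adj a b := by
    intro a b; simp
  have key : IsFTPreserver G₀ H S Set.univ 2 := by
    constructor
    · intro a b hab
      exact (hG'adj a b).mp (hH'.1 hab)
    · intro F hF hFc s hs t _
      set F' : Set (Sym2 β) := Sym2.map ⇑e '' F with hF'def
      have hmem : ∀ a b : α, (s(e a, e b) ∈ F') ↔ s(a, b) ∈ F := by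
        intro a b
        rw [hF'def, show s(e a, e b) = Sym2.map ⇑e s(a, b) from (Sym2.map_pair_eq _ _ _).symm]
        exact hinj2.mem_set_image
      have hsubF' : F' ⊆ (G₀.comap ⇑e.symm).edgeSet := by
        rintro x ⟨y, hy, rfl⟩
        induction y using Sym2.ind with
        | _ a b =>
          rw [Sym2.map_pair_eq, SimpleGraph.mem_edgeSet]
          exact (hG'adj a b).mpr (hF hy)
      have hcardF' : F'.ncard ≤ 2 := by
        rw [hF'def, Set.ncard_image_of_injective _ hinj2]; exact hFc
      obtain ⟨hiff', hdist'⟩ := hH'.2 F' hsubF' hcardF' (e s) ⟨s, hs, rfl⟩ (e t)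
        (Set.mem_univ _)
      have hadjH : ∀ a b : α, (H'.deleteEdges F').Adj (e a) (e b)
          ↔ (H.deleteEdges F).Adj a b := by
        intro a b
        simp only [SimpleGraph.deleteEdges_adj]
        rw [hmem a b]
        exact and_congr_left fun _ => Iff.rfl
      have hadjG : ∀ a b : α, ((G₀.comap ⇑e.symm).deleteEdges F').Adj (e a) (e b)
          ↔ (G₀.deleteEdges F).Adj a b := by
        intro a b
        simp only [SimpleGraph.deleteEdges_adj]
        rw [hmem a b]
        exact and_congr_left fun _ => hG'adj a b
      let isoH : (H.deleteEdges F) ≃g (H'.deleteEdges F') := ⟨e, hadjH _ _⟩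
      let isoG : (G₀.deleteEdges F) ≃g ((G₀.comap ⇑e.symm).deleteEdges F') := ⟨e, hadjG _ _⟩
      have hcH : ∀ x : α, isoH x = e x := fun _ => rfl
      have hcG : ∀ x : α, isoG x = e x := fun _ => rfl
      have hreH := (Iso.reachable_iff (φ := isoH) (u := s) (v := t)).symm
      have hreG := (Iso.reachable_iff (φ := isoG) (u := s) (v := t)).symm
      rw [hcH s, hcH t] at hreH
      rw [hcG s, hcG t] at hreG
      refine ⟨hreH.trans (hiff'.trans hreG.symm), fun hre => ?_⟩
      have h1 := iso_dist isoH s t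
      have h2 := iso_dist isoG s t
      rw [hcH s, hcH t] at h1
      rw [hcG s, hcG t] at h2
      have h3 := hdist' (hreG.mp hre)
      omega
  have hsub : Sym2.map ⇑e '' H.edgeSet ⊆ H'.edgeSet := by
    rintro x ⟨y, hy, rfl⟩
    induction y using Sym2.ind with
    | _ a b =>
      rw [Sym2.map_pair_eq, SimpleGraph.mem_edgeSet]
      exact hy
  calc k ≤ H.edgeSet.ncard := hcore H key
    _ = (Sym2.map ⇑e '' H.edgeSet).ncard := (Set.ncard_image_of_injective _ hinj2).symm
    _ ≤ H'.edgeSet.ncard := Set.ncard_le_ncard hsub (Set.toFinite _)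

variable {σ d m : ℕ}

lemma sock_inj : Function.Injective (fun p : (Fin σ × Fin d × Fin d) × Fin m =>
    s(socket p.1.1 p.1.2.1 p.1.2.2, vterm p.2)) := by
  rintro ⟨⟨a, b, c⟩, z⟩ ⟨⟨a', b', c'⟩, z'⟩ hpq
  rw [Sym2.eq_iff] at hpq
  rcases hpq with ⟨h1, h2⟩ | ⟨h1, h2⟩
  · simp only [socket, vtail, vterm, Sum.inl.injEq, Sum.inr.injEq, Prod.mk.injEq] at h1 h2
    obtain ⟨ha, hb, hc, -⟩ := h1
    simp [ha, hb, hc, h2]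
  · exfalso
    simp [socket, vtail, vterm] at h1

lemma core_count (H : SimpleGraph (V σ d m))
    (hH : IsFTPreserver (Gr σ d m) H (Set.range (vsrc : Fin σ → V σ d m)) Set.univ 2) :
    σ * d * d * m ≤ H.edgeSet.ncard := by
  have hsub : Set.range (fun p : (Fin σ × Fin d × Fin d) × Fin m =>
      s(socket p.1.1 p.1.2.1 p.1.2.2, vterm p.2)) ⊆ H.edgeSet := by
    rintro x ⟨p, rfl⟩
    exact forced p.1.1 p.1.2.1 p.1.2.2 p.2 H hH
  have h1 : (Set.range (fun p : (Fin σ × Fin d × Fin d) × Fin m =>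
      s(socket p.1.1 p.1.2.1 p.1.2.2, vterm p.2))).ncard = σ * d * d * m := by
    rw [← Set.image_univ, Set.ncard_image_of_injective _ sock_inj, Set.ncard_univ]
    simp only [Nat.card_eq_fintype_card, Fintype.card_prod, Fintype.card_fin]
    ring
  calc σ * d * d * m = _ := h1.symm
    _ ≤ H.edgeSet.ncard := Set.ncard_le_ncard hsub (Set.toFinite _)

lemma srcs_ncard : (Set.range (vsrc : Fin σ → V σ d m)).ncard = σ := by
  rw [← Set.image_univ, Set.ncard_image_of_injective _
    (show Function.Injective (vsrc : Fin σ → V σ d m) by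
      intro a b hab
      simpa [vsrc] using hab),
    Set.ncard_univ]
  simp

lemma card_V (σ d m : ℕ) :
    Fintype.card (V σ d m)
      = σ * (1 + d + d * (d * d + 2 * (d - 1)) + d * (d * (2 * (d - 1) + 1))) + m := by
  simp only [V, GV, Fintype.card_sum, Fintype.card_prod, Fintype.card_fin, Fintype.card_unit]
  ring

end S7
namespace S7

lemma card_le (σ d : ℕ) (hd : 1 ≤ d) :
    Fintype.card (V σ d (σ * (d * d * d))) ≤ 5 * σ * (d * d * d) := by
  rw [card_V]
  obtain ⟨e, rfl⟩ : ∃ e, d = e + 1 := ⟨d - 1, by omega⟩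
  have h1 : 1 + (e + 1) + (e + 1) * ((e + 1) * (e + 1) + 2 * (e + 1 - 1))
      + (e + 1) * ((e + 1) * (2 * (e + 1 - 1) + 1)) ≤ 4 * ((e + 1) * (e + 1) * (e + 1)) := by
    have h2 : e + 1 - 1 = e := rfl
    rw [h2]
    nlinarith [sq_nonneg e, e.zero_le]
  calc σ * (1 + (e + 1) + (e + 1) * ((e + 1) * (e + 1) + 2 * (e + 1 - 1))
        + (e + 1) * ((e + 1) * (2 * (e + 1 - 1) + 1))) + σ * ((e + 1) * (e + 1) * (e + 1))
      ≤ σ * (4 * ((e + 1) * (e + 1) * (e + 1))) + σ * ((e + 1) * (e + 1) * (e + 1)) := by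
        exact Nat.add_le_add_right (Nat.mul_le_mul_left σ h1) _
    _ = 5 * σ * ((e + 1) * (e + 1) * (e + 1)) := by ring

lemma real_bound (σ d n E : ℕ) (hσ : 1 ≤ σ) (hd : 1 ≤ d) (hn : n ≤ 5 * σ * (d * d * d))
    (hE : σ * d * d * (σ * (d * d * d)) ≤ E) :
    (1 / 15 : ℝ) * (n : ℝ) ^ ((5 : ℝ) / 3) * (σ : ℝ) ^ ((1 : ℝ) / 3) ≤ (E : ℝ) := by
  have hσR : (1 : ℝ) ≤ (σ : ℝ) := by exact_mod_cast hσ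
  have hdR : (1 : ℝ) ≤ (d : ℝ) := by exact_mod_cast hd
  have h0 : (0 : ℝ) ≤ (n : ℝ) := Nat.cast_nonneg n
  have hb : (n : ℝ) ≤ 5 * (σ : ℝ) * ((d : ℝ) * d * d) := by exact_mod_cast hn
  have h1 : (n : ℝ) ^ ((5 : ℝ) / 3) ≤ (5 * (σ : ℝ) * ((d : ℝ) * d * d)) ^ ((5 : ℝ) / 3) :=
    Real.rpow_le_rpow h0 hb (by norm_num)
  have hprod : (5 * (σ : ℝ) * ((d : ℝ) * d * d)) ^ ((5 : ℝ) / 3)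
      = (5 : ℝ) ^ ((5 : ℝ) / 3) * (σ : ℝ) ^ ((5 : ℝ) / 3)
        * ((d : ℝ) * d * d) ^ ((5 : ℝ) / 3) := by
    rw [Real.mul_rpow (by positivity) (by positivity),
      Real.mul_rpow (by positivity) (by positivity)]
  have hd3 : ((d : ℝ) * d * d) ^ ((5 : ℝ) / 3) = (d : ℝ) ^ (5 : ℕ) := by
    rw [show (d : ℝ) * d * d = (d : ℝ) ^ (3 : ℕ) by ring,
      ← Real.rpow_natCast (d : ℝ) 3, ← Real.rpow_mul (by positivity),
      show ((3 : ℕ) : ℝ) * (5 / 3) = ((5 : ℕ) : ℝ) by norm_num, Real.rpow_natCast]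
  have hσc : (σ : ℝ) ^ ((5 : ℝ) / 3) * (σ : ℝ) ^ ((1 : ℝ) / 3) = (σ : ℝ) ^ (2 : ℕ) := by
    rw [← Real.rpow_add (by positivity), show (5 : ℝ) / 3 + 1 / 3 = ((2 : ℕ) : ℝ) by norm_num,
      Real.rpow_natCast]
  have h5 : (5 : ℝ) ^ ((5 : ℝ) / 3) ≤ 15 := by
    have h53 : ((5 : ℝ) ^ ((5 : ℝ) / 3)) ^ (3 : ℕ) = 5 ^ (5 : ℕ) := by
      rw [← Real.rpow_natCast ((5 : ℝ) ^ ((5 : ℝ) / 3)) 3, ← Real.rpow_mul (by norm_num),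
        show (5 : ℝ) / 3 * ((3 : ℕ) : ℝ) = ((5 : ℕ) : ℝ) by norm_num, Real.rpow_natCast]
    refine le_of_pow_le_pow_left₀ (n := 3) (by norm_num) (by norm_num) ?_
    rw [h53]; norm_num
  have hE' : (σ : ℝ) ^ (2 : ℕ) * (d : ℝ) ^ (5 : ℕ) ≤ (E : ℝ) := by
    have : ((σ * d * d * (σ * (d * d * d)) : ℕ) : ℝ) ≤ (E : ℝ) := Nat.cast_le.mpr hE
    push_cast at this
    nlinarith [this]
  have hrn : (0 : ℝ) ≤ (σ : ℝ) ^ ((1 : ℝ) / 3) := Real.rpow_nonneg (by positivity) _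
  have hpos : (0 : ℝ) ≤ (σ : ℝ) ^ (2 : ℕ) * (d : ℝ) ^ (5 : ℕ) := by positivity
  calc (1 / 15 : ℝ) * (n : ℝ) ^ ((5 : ℝ) / 3) * (σ : ℝ) ^ ((1 : ℝ) / 3)
      ≤ (1 / 15 : ℝ) * ((5 * (σ : ℝ) * ((d : ℝ) * d * d)) ^ ((5 : ℝ) / 3))
        * (σ : ℝ) ^ ((1 : ℝ) / 3) := by
        have := mul_le_mul_of_nonneg_left h1 (show (0 : ℝ) ≤ 1 / 15 by norm_num)
        exact mul_le_mul_of_nonneg_right this hrn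
    _ = (1 / 15 : ℝ) * (5 : ℝ) ^ ((5 : ℝ) / 3)
        * ((σ : ℝ) ^ (2 : ℕ) * (d : ℝ) ^ (5 : ℕ)) := by
        rw [hprod, hd3]
        rw [show (1 : ℝ) / 15 * ((5 : ℝ) ^ ((5 : ℝ) / 3) * (σ : ℝ) ^ ((5 : ℝ) / 3)
            * (d : ℝ) ^ (5 : ℕ)) * (σ : ℝ) ^ ((1 : ℝ) / 3)
          = 1 / 15 * (5 : ℝ) ^ ((5 : ℝ) / 3)
            * (((σ : ℝ) ^ ((5 : ℝ) / 3) * (σ : ℝ) ^ ((1 : ℝ) / 3)) * (d : ℝ) ^ (5 : ℕ)) by ring,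
          hσc]
    _ ≤ 1 * ((σ : ℝ) ^ (2 : ℕ) * (d : ℝ) ^ (5 : ℕ)) := by
        refine mul_le_mul_of_nonneg_right ?_ hpos
        nlinarith [h5]
    _ ≤ (E : ℝ) := by rw [one_mul]; exact hE'

end S7
/-- There is a constant `c > 0` such that for every `σ ≥ 1` there are
infinitely many `n` admitting an `n`-vertex graph `G` and a set `S` of `σ` vertices for which
every `2`-FT `S × V` distance preserver of `G` has at least `c · n^{5/3} · σ^{1/3}` edges. -/
theorem statement7 :
    ∃ c : ℝ, 0 < c ∧
      ∀ σ : ℕ, 1 ≤ σ → ∀ N : ℕ, ∃ n : ℕ, N ≤ n ∧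
        ∃ (G : SimpleGraph (Fin n)) (S : Set (Fin n)), S.ncard = σ ∧
          ∀ H : SimpleGraph (Fin n), IsFTPreserver G H S Set.univ 2 →
            c * (n : ℝ) ^ ((5 : ℝ) / 3) * (σ : ℝ) ^ ((1 : ℝ) / 3)
              ≤ (H.edgeSet.ncard : ℝ) := by
  refine ⟨1 / 15, by norm_num, ?_⟩
  intro σ hσ N
  have hd1 : 1 ≤ max N 1 := le_max_right _ _
  set d := max N 1 with hddef
  set m := σ * (d * d * d) with hmdef
  refine ⟨Fintype.card (S7.V σ d m), ?_, ?_⟩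
  · have hcard := S7.card_V σ d m
    have hdm : d ≤ m := by
      have h1 : d ≤ d * d * d := by nlinarith
      calc d ≤ d * d * d := h1
        _ = 1 * (d * d * d) := (one_mul _).symm
        _ ≤ σ * (d * d * d) := Nat.mul_le_mul_right _ hσ
    have hNd : N ≤ d := le_max_left _ _
    omega
  · set n := Fintype.card (S7.V σ d m) with hndef
    set e := Fintype.equivFin (S7.V σ d m) with hedef
    refine ⟨(S7.Gr σ d m).comap ⇑e.symm,
      ⇑e '' (Set.range (S7.vsrc : Fin σ → S7.V σ d m)), ?_, ?_⟩
    · rw [Set.ncard_image_of_injective _ e.injective, S7.srcs_ncard]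
    · intro H hH
      have hk := S7.transport e (S7.Gr σ d m)
        (Set.range (S7.vsrc : Fin σ → S7.V σ d m)) (σ * d * d * m)
        (fun H₀ hH₀ => S7.core_count H₀ hH₀) H hH
      exact S7.real_bound σ d n H.edgeSet.ncard hσ hd1 (S7.card_le σ d hd1) hk
end
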